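/- arXiv:1612.00822 — 5 statements merged into one kernel-verified Lean document; each statement's English description precedes it below -/
import Mathlib

section
/- For the transformation T(x) = (x + 1/2) mod 1 on [0,1) with Lebesgue measure, the Tauberian constant C*_T(α) := sup over measurable E with |E| > 0 of |{x : T*χ_E(x) > α}| / |E| satisfies C*_T(α) = 2 for 0 < α < 2/3 and C*_T(α) = 1 for 2/3 ≤ α < 1. -/
open MeasureTheory Set ENNReal

/-- The transformation `T(x) = (x + 1/2) mod 1` on `[0,1)`, as a bijection of `[0,1)`. -/
noncomputable def halfRot : Equiv.Perm ↥(Set.Ico (0:ℝ) 1) :=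
  Function.Involutive.toPerm
    (fun x => ⟨Int.fract (x.1 + 1/2),
      Set.mem_Ico.mpr ⟨Int.fract_nonneg _, Int.fract_lt_one _⟩⟩)
    (by
      intro x
      apply Subtype.ext
      show Int.fract (Int.fract (x.1 + 1/2) + 1/2) = x.1
      have h : Int.fract (x.1 + 1/2) + 1/2 = (x.1 + ((1:ℤ):ℝ)) - (⌊x.1 + 1/2⌋ : ℤ) := by
        rw [Int.fract]; push_cast; ring
      rw [h, Int.fract_sub_intCast, Int.fract_add_intCast, Int.fract_eq_self.2 ⟨x.2.1, x.2.2⟩])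

/-- Lebesgue measure on `[0,1)`. -/
noncomputable def μ01 : Measure ↥(Set.Ico (0:ℝ) 1) := volume.comap Subtype.val
noncomputable def ergAvg {Ω : Type*} (T : Equiv.Perm Ω) (E : Set Ω) (M N : ℤ) (ω : Ω) : ℝ :=
  (∑ j ∈ Finset.Icc M N, E.indicator (fun _ => (1:ℝ)) ((T ^ j) ω)) / ((N : ℝ) - (M : ℝ) + 1)

/-- The two-sided ergodic maximal function `T*χ_E`. -/
noncomputable def ergMax {Ω : Type*} (T : Equiv.Perm Ω) (E : Set Ω) (ω : Ω) : ℝ :=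
  ⨆ p : {p : ℤ × ℤ // p.1 ≤ 0 ∧ 0 ≤ p.2}, ergAvg T E p.1.1 p.1.2 ω
/-- The Tauberian constant `C*_T(α)` of the two-sided ergodic maximal operator. -/
noncomputable def ergTauber {Ω : Type*} [MeasurableSpace Ω] (μ : Measure Ω) (T : Equiv.Perm Ω)
    (α : ℝ) : ℝ≥0∞ :=
  ⨆ E : {E : Set Ω // MeasurableSet E ∧ 0 < μ E}, μ {ω | α < ergMax T E.1 ω} / μ E.1

section Aux
variable {Ω : Type*}

lemma zpow_invol (T : Equiv.Perm Ω) (hT : T * T = 1) (j : ℤ) (ω : Ω) :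
    (T ^ j) ω = if Even j then ω else T ω := by
  have h2 : T ^ (2:ℤ) = 1 := by
    rw [show (2:ℤ) = 1 + 1 by ring, zpow_add, zpow_one, hT]
  rcases Int.even_or_odd j with ⟨k, hk⟩ | ⟨k, hk⟩
  · have : T ^ j = 1 := by
      rw [hk, show k + k = 2 * k by ring, zpow_mul, h2, one_zpow]
    rw [this, if_pos ⟨k, hk⟩]; rfl
  · have : T ^ j = T := by
      rw [hk, zpow_add, zpow_mul, h2, one_zpow, zpow_one, one_mul]
    rw [this, if_neg (by simp [Int.even_iff, hk, Int.add_mul_emod_self_left])]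

lemma counts (M N : ℤ) (hM : M ≤ 0) (hN : 0 ≤ N) :
    ((Finset.Icc M N).filter (fun j => Even j)).card
      + ((Finset.Icc M N).filter (fun j => ¬ Even j)).card = (N + 1 - M).toNat ∧
    1 ≤ ((Finset.Icc M N).filter (fun j => Even j)).card ∧
    ((Finset.Icc M N).filter (fun j => ¬ Even j)).card
      ≤ ((Finset.Icc M N).filter (fun j => Even j)).card + 1 := by
  set a := ((Finset.Icc M N).filter (fun j => Even j)).card with ha
  set b := ((Finset.Icc M N).filter (fun j => ¬ Even j)).card with hb
  refine ⟨?_, ?_, ?_⟩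
  · rw [ha, hb, Finset.card_filter_add_card_filter_not, Int.card_Icc]
  · apply Finset.card_pos.2
    exact ⟨0, Finset.mem_filter.2 ⟨Finset.mem_Icc.2 ⟨hM, hN⟩, Even.zero⟩⟩
  · have hinj : ((Finset.Icc M N).filter (fun j => ¬ Even j)).card
        ≤ ((Finset.Icc M (N+1)).filter (fun j => Even j)).card := by
      apply Finset.card_le_card_of_injOn (fun j => j + 1)
      · intro j hj
        beta_reduce
        rw [Finset.mem_coe, Finset.mem_filter, Finset.mem_Icc] at hj ⊢
        refine ⟨⟨by omega, by omega⟩, ?_⟩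
        rcases Int.even_or_odd j with h | h
        · exact absurd h hj.2
        · exact (Int.even_add_one).2 hj.2
      · intro x _ y _ h; simpa using h
    have hsub : ((Finset.Icc M (N+1)).filter (fun j => Even j))
        ⊆ insert (N+1) ((Finset.Icc M N).filter (fun j => Even j)) := by
      intro j hj
      rw [Finset.mem_filter, Finset.mem_Icc] at hj
      rw [Finset.mem_insert, Finset.mem_filter, Finset.mem_Icc]
      rcases eq_or_lt_of_le hj.1.2 with h | h
      · exact Or.inl h
      · exact Or.inr ⟨⟨hj.1.1, by omega⟩, hj.2⟩
    calc b ≤ _ := hinj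
      _ ≤ _ := Finset.card_le_card hsub
      _ ≤ a + 1 := by rw [add_comm]; exact Finset.card_insert_le _ _


lemma ergAvg_eq (T : Equiv.Perm Ω) (hT : T * T = 1) (E : Set Ω) (M N : ℤ) (ω : Ω) :
    ergAvg T E M N ω =
      ((((Finset.Icc M N).filter (fun j => Even j)).card : ℝ)
          * E.indicator (fun _ => (1:ℝ)) ω
        + (((Finset.Icc M N).filter (fun j => ¬ Even j)).card : ℝ)
          * E.indicator (fun _ => (1:ℝ)) (T ω)) / ((N : ℝ) - (M : ℝ) + 1) := by
  unfold ergAvg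
  congr 1
  have : ∀ j ∈ Finset.Icc M N, E.indicator (fun _ => (1:ℝ)) ((T ^ j) ω)
      = if Even j then E.indicator (fun _ => (1:ℝ)) ω
        else E.indicator (fun _ => (1:ℝ)) (T ω) := by
    intro j _
    rw [zpow_invol T hT]
    split_ifs <;> rfl
  rw [Finset.sum_congr rfl this, Finset.sum_ite, Finset.sum_const, Finset.sum_const,
    nsmul_eq_mul, nsmul_eq_mul]

lemma indicator_mem {E : Set Ω} {ω : Ω} (h : ω ∈ E) :
    E.indicator (fun _ => (1:ℝ)) ω = 1 := Set.indicator_of_mem h _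
lemma indicator_not_mem {E : Set Ω} {ω : Ω} (h : ω ∉ E) :
    E.indicator (fun _ => (1:ℝ)) ω = 0 := Set.indicator_of_notMem h _

lemma cast_counts (M N : ℤ) (hM : M ≤ 0) (hN : 0 ≤ N) :
    ((((Finset.Icc M N).filter (fun j => Even j)).card : ℝ)
      + (((Finset.Icc M N).filter (fun j => ¬ Even j)).card : ℝ)) = (N : ℝ) - (M : ℝ) + 1 := by
  have h := (counts M N hM hN).1
  have : (((N + 1 - M).toNat : ℤ) : ℝ) = (N : ℝ) - M + 1 := by
    rw [Int.toNat_of_nonneg (by omega)]; push_cast; ring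
  rw [← this, ← h]; push_cast; ring


lemma ind_le_one (E : Set Ω) (ω : Ω) : E.indicator (fun _ => (1:ℝ)) ω ≤ 1 := by
  classical rw [Set.indicator_apply]; split_ifs <;> norm_num
lemma ind_nonneg (E : Set Ω) (ω : Ω) : 0 ≤ E.indicator (fun _ => (1:ℝ)) ω := by
  classical rw [Set.indicator_apply]; split_ifs <;> norm_num

lemma ergAvg_le_one (T : Equiv.Perm Ω) (hT : T * T = 1) (E : Set Ω) (ω : Ω)
    (M N : ℤ) (hM : M ≤ 0) (hN : 0 ≤ N) : ergAvg T E M N ω ≤ 1 := by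
  rw [ergAvg_eq T hT]
  set a := (((Finset.Icc M N).filter (fun j => Even j)).card : ℝ)
  set b := (((Finset.Icc M N).filter (fun j => ¬ Even j)).card : ℝ)
  have hab : a + b = (N : ℝ) - (M : ℝ) + 1 := cast_counts M N hM hN
  have hL : (0:ℝ) < (N : ℝ) - (M : ℝ) + 1 := by
    have : (M:ℝ) ≤ 0 := by exact_mod_cast hM
    have : (0:ℝ) ≤ (N:ℝ) := by exact_mod_cast hN
    linarith [show (M:ℝ) ≤ 0 from by exact_mod_cast hM]
  rw [div_le_one hL, ← hab]
  have hx : E.indicator (fun _ => (1:ℝ)) ω ≤ 1 := ind_le_one E ω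
  have hy : E.indicator (fun _ => (1:ℝ)) (T ω) ≤ 1 :=
    ind_le_one E (T ω)
  have ha : 0 ≤ a := Nat.cast_nonneg _
  have hb : 0 ≤ b := Nat.cast_nonneg _
  nlinarith

lemma ergAvg_le_23 (T : Equiv.Perm Ω) (hT : T * T = 1) (E : Set Ω) (ω : Ω) (hω : ω ∉ E)
    (M N : ℤ) (hM : M ≤ 0) (hN : 0 ≤ N) : ergAvg T E M N ω ≤ 2/3 := by
  rw [ergAvg_eq T hT, indicator_not_mem hω, mul_zero, zero_add]
  set a := (((Finset.Icc M N).filter (fun j => Even j)).card : ℝ) with ha'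
  set b := (((Finset.Icc M N).filter (fun j => ¬ Even j)).card : ℝ) with hb'
  have hab : a + b = (N : ℝ) - (M : ℝ) + 1 := cast_counts M N hM hN
  have hL : (0:ℝ) < (N : ℝ) - (M : ℝ) + 1 := by
    linarith [show (M:ℝ) ≤ 0 from by exact_mod_cast hM, show (0:ℝ) ≤ (N:ℝ) from by exact_mod_cast hN]
  have h1a : 1 ≤ a := by
    rw [ha']; exact_mod_cast (counts M N hM hN).2.1
  have hba : b ≤ a + 1 := by
    rw [ha', hb']; exact_mod_cast (counts M N hM hN).2.2
  have hy : E.indicator (fun _ => (1:ℝ)) (T ω) ≤ 1 :=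
    ind_le_one E (T ω)
  have hy0 : 0 ≤ E.indicator (fun _ => (1:ℝ)) (T ω) :=
    ind_nonneg E (T ω)
  rw [div_le_iff₀ hL, ← hab]
  nlinarith

lemma ergAvg_zero (T : Equiv.Perm Ω) (hT : T * T = 1) (E : Set Ω) (ω : Ω) (hω : ω ∉ E)
    (hω2 : T ω ∉ E) (M N : ℤ) : ergAvg T E M N ω = 0 := by
  rw [ergAvg_eq T hT, indicator_not_mem hω, indicator_not_mem hω2]
  simp


instance : Nonempty {p : ℤ × ℤ // p.1 ≤ 0 ∧ 0 ≤ p.2} := ⟨⟨(0,0), le_refl _, le_refl _⟩⟩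

lemma ergAvg_00 (T : Equiv.Perm Ω) (E : Set Ω) (ω : Ω) (hω : ω ∈ E) :
    ergAvg T E 0 0 ω = 1 := by
  unfold ergAvg
  rw [Finset.Icc_self, Finset.sum_singleton, zpow_zero]
  simp [indicator_mem hω]

lemma ergAvg_m11 (T : Equiv.Perm Ω) (hT : T * T = 1) (E : Set Ω) (ω : Ω) (hω : ω ∉ E)
    (hω2 : T ω ∈ E) : ergAvg T E (-1) 1 ω = 2/3 := by
  unfold ergAvg
  have hIcc : Finset.Icc (-1:ℤ) 1 = {-1, 0, 1} := by decide
  rw [hIcc]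
  rw [Finset.sum_insert (by decide), Finset.sum_insert (by decide), Finset.sum_singleton]
  rw [zpow_invol T hT, zpow_invol T hT, zpow_invol T hT]
  norm_num [indicator_mem hω2, indicator_not_mem hω]

lemma ergMax_bdd (T : Equiv.Perm Ω) (hT : T * T = 1) (E : Set Ω) (ω : Ω) :
    BddAbove (Set.range fun p : {p : ℤ × ℤ // p.1 ≤ 0 ∧ 0 ≤ p.2} =>
      ergAvg T E p.1.1 p.1.2 ω) := by
  refine ⟨1, ?_⟩
  rintro r ⟨⟨⟨M, N⟩, hM, hN⟩, rfl⟩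
  exact ergAvg_le_one T hT E ω M N hM hN

open scoped Classical in
lemma ergMax_eq (T : Equiv.Perm Ω) (hT : T * T = 1) (E : Set Ω) (ω : Ω) :
    ergMax T E ω = if ω ∈ E then 1 else if T ω ∈ E then (2:ℝ)/3 else 0 := by
  classical
  unfold ergMax
  by_cases hω : ω ∈ E
  · rw [if_pos hω]
    apply le_antisymm
    · exact ciSup_le fun ⟨⟨M, N⟩, hM, hN⟩ => ergAvg_le_one T hT E ω M N hM hN
    · exact le_ciSup_of_le (ergMax_bdd T hT E ω) ⟨(0,0), le_refl _, le_refl _⟩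
        (le_of_eq (ergAvg_00 T E ω hω).symm)
  · rw [if_neg hω]
    by_cases hω2 : T ω ∈ E
    · rw [if_pos hω2]
      apply le_antisymm
      · exact ciSup_le fun ⟨⟨M, N⟩, hM, hN⟩ => ergAvg_le_23 T hT E ω hω M N hM hN
      · exact le_ciSup_of_le (ergMax_bdd T hT E ω) ⟨(-1,1), by norm_num, by norm_num⟩
          (le_of_eq (ergAvg_m11 T hT E ω hω hω2).symm)
    · rw [if_neg hω2]
      have : ∀ p : {p : ℤ × ℤ // p.1 ≤ 0 ∧ 0 ≤ p.2},
          ergAvg T E p.1.1 p.1.2 ω = 0 := fun ⟨⟨M, N⟩, _, _⟩ =>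
        ergAvg_zero T hT E ω hω hω2 M N
      simp only [this]
      exact ciSup_const

end Aux

lemma halfRot_apply (x : ↥(Set.Ico (0:ℝ) 1)) : (halfRot x).1 = Int.fract (x.1 + 1/2) := by
  rfl

lemma halfRot_invol : halfRot * halfRot = 1 := by
  ext x
  show ((halfRot (halfRot x)) : ℝ) = x
  rw [halfRot_apply, halfRot_apply]
  have h : Int.fract (x.1 + 1/2) + 1/2 = (x.1 + ((1:ℤ):ℝ)) - (⌊x.1 + 1/2⌋ : ℤ) := by
    rw [Int.fract]; push_cast; ring
  rw [h, Int.fract_sub_intCast, Int.fract_add_intCast, Int.fract_eq_self.2 ⟨x.2.1, x.2.2⟩]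

lemma emb : MeasurableEmbedding (Subtype.val : ↥(Set.Ico (0:ℝ) 1) → ℝ) :=
  MeasurableEmbedding.subtype_coe measurableSet_Ico

lemma μ01_apply (S : Set ↥(Set.Ico (0:ℝ) 1)) : μ01 S = volume (Subtype.val '' S) :=
  emb.comap_apply volume S

lemma fract_lo {x : ℝ} (h0 : 0 ≤ x) (h : x < 1/2) : Int.fract (x + 1/2) = x + 1/2 :=
  Int.fract_eq_self.2 ⟨by linarith, by linarith⟩

lemma fract_hi {x : ℝ} (h0 : 1/2 ≤ x) (h : x < 1) : Int.fract (x + 1/2) = x - 1/2 := by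
  have : x + 1/2 = (x - 1/2) + 1 := by ring
  rw [this, Int.fract_add_one, Int.fract_eq_self.2 ⟨by linarith, by linarith⟩]

lemma image_preimage_halfRot (S : Set ↥(Set.Ico (0:ℝ) 1)) :
    Subtype.val '' (⇑halfRot ⁻¹' S) =
      (Set.Ico (0:ℝ) (1/2) ∩ (fun x => x + 1/2) ⁻¹' (Subtype.val '' S)) ∪
      (Set.Ico (1/2:ℝ) 1 ∩ (fun x => x - 1/2) ⁻¹' (Subtype.val '' S)) := by
  ext x
  simp only [Set.mem_image, Set.mem_preimage, Set.mem_union, Set.mem_inter_iff, Set.mem_Ico]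
  constructor
  · rintro ⟨ω, hω, rfl⟩
    have hmem : (halfRot ω).1 ∈ Subtype.val '' S := ⟨halfRot ω, hω, rfl⟩
    rw [halfRot_apply] at hmem
    rcases lt_or_ge ω.1 (1/2) with h | h
    · left
      refine ⟨⟨ω.2.1, h⟩, ?_⟩
      rwa [fract_lo ω.2.1 h] at hmem
    · right
      refine ⟨⟨h, ω.2.2⟩, ?_⟩
      rwa [fract_hi h ω.2.2] at hmem
  · rintro (⟨⟨h0, h1⟩, hmem⟩ | ⟨⟨h0, h1⟩, hmem⟩)
    · refine ⟨⟨x, h0, by linarith⟩, ?_, rfl⟩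
      obtain ⟨z, hz, hzval⟩ := hmem
      have : halfRot ⟨x, h0, by linarith⟩ = z := by
        apply Subtype.ext
        rw [halfRot_apply, hzval]
        exact fract_lo h0 h1
      rwa [this]
    · refine ⟨⟨x, by linarith, h1⟩, ?_, rfl⟩
      obtain ⟨z, hz, hzval⟩ := hmem
      have : halfRot ⟨x, by linarith, h1⟩ = z := by
        apply Subtype.ext
        rw [halfRot_apply, hzval]
        exact fract_hi h0 h1
      rwa [this]

lemma μ01_preserve (S : Set ↥(Set.Ico (0:ℝ) 1)) (hS : MeasurableSet S) :
    μ01 (⇑halfRot ⁻¹' S) = μ01 S := by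
  rw [μ01_apply, μ01_apply, image_preimage_halfRot]
  set A := Subtype.val '' S with hA
  have hAm : MeasurableSet A := emb.measurableSet_image.2 hS
  have hAsub : A ⊆ Set.Ico (0:ℝ) 1 := by
    rintro x ⟨z, _, rfl⟩; exact z.2
  have e1 : Set.Ico (0:ℝ) (1/2) ∩ (fun x => x + 1/2) ⁻¹' A
      = (fun x => x + 1/2) ⁻¹' (A ∩ Set.Ico (1/2:ℝ) 1) := by
    ext x
    simp only [Set.mem_inter_iff, Set.mem_preimage, Set.mem_Ico]
    constructor
    · rintro ⟨⟨h0, h1⟩, h⟩; exact ⟨h, by constructor <;> linarith⟩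
    · rintro ⟨h, h0, h1⟩; exact ⟨⟨by linarith, by linarith⟩, h⟩
  have e2 : Set.Ico (1/2:ℝ) 1 ∩ (fun x => x - 1/2) ⁻¹' A
      = (fun x => x - 1/2) ⁻¹' (A ∩ Set.Ico (0:ℝ) (1/2)) := by
    ext x
    simp only [Set.mem_inter_iff, Set.mem_preimage, Set.mem_Ico]
    constructor
    · rintro ⟨⟨h0, h1⟩, h⟩
      refine ⟨h, by constructor <;> linarith⟩
    · rintro ⟨h, h0, h1⟩; exact ⟨⟨by linarith, by linarith⟩, h⟩
  rw [e1, e2]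
  have v1 : volume ((fun x : ℝ => x + 1/2) ⁻¹' (A ∩ Set.Ico (1/2:ℝ) 1))
      = volume (A ∩ Set.Ico (1/2:ℝ) 1) := by
    have : (fun x : ℝ => x + 1/2) = (fun x : ℝ => (1/2 : ℝ) + x) := by
      funext x; ring
    rw [this, measure_preimage_add]
  have v2 : volume ((fun x : ℝ => x - 1/2) ⁻¹' (A ∩ Set.Ico (0:ℝ) (1/2)))
      = volume (A ∩ Set.Ico (0:ℝ) (1/2)) := by
    have : (fun x : ℝ => x - 1/2) = (fun x : ℝ => (-(1/2) : ℝ) + x) := by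
      funext x; ring
    rw [this, measure_preimage_add]
  have hdisj : Disjoint ((fun x : ℝ => x + 1/2) ⁻¹' (A ∩ Set.Ico (1/2:ℝ) 1))
      ((fun x : ℝ => x - 1/2) ⁻¹' (A ∩ Set.Ico (0:ℝ) (1/2))) := by
    rw [Set.disjoint_left]
    rintro x ⟨_, h0, _⟩ ⟨_, _, h1⟩
    simp only at h0 h1
    linarith
  have hm2 : MeasurableSet ((fun x : ℝ => x - 1/2) ⁻¹' (A ∩ Set.Ico (0:ℝ) (1/2))) :=
    (measurable_id.sub_const _) (hAm.inter measurableSet_Ico)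
  rw [measure_union hdisj hm2, v1, v2]
  have hsplit : A = (A ∩ Set.Ico (0:ℝ) (1/2)) ∪ (A ∩ Set.Ico (1/2:ℝ) 1) := by
    rw [← Set.inter_union_distrib_left, Set.Ico_union_Ico_eq_Ico (by norm_num) (by norm_num)]
    exact (Set.inter_eq_left.2 hAsub).symm
  have hd2 : Disjoint (A ∩ Set.Ico (0:ℝ) (1/2)) (A ∩ Set.Ico (1/2:ℝ) 1) := by
    rw [Set.disjoint_left]
    rintro x ⟨_, _, h1⟩ ⟨_, h2, _⟩
    linarith
  conv_rhs => rw [hsplit]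
  rw [measure_union hd2 (hAm.inter measurableSet_Ico), add_comm]

lemma μ01_univ : μ01 Set.univ = 1 := by
  rw [μ01_apply, Set.image_univ, Subtype.range_coe, Real.volume_Ico]
  norm_num

lemma μ01_ne_top (S : Set ↥(Set.Ico (0:ℝ) 1)) : μ01 S ≠ ⊤ := by
  have : μ01 S ≤ 1 := μ01_univ ▸ measure_mono (Set.subset_univ S)
  exact ne_top_of_le_ne_top one_ne_top this

-- extremal set
noncomputable def E0 : Set ↥(Set.Ico (0:ℝ) 1) := Subtype.val ⁻¹' Set.Ico (0:ℝ) (1/4)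

lemma E0_meas : MeasurableSet E0 := measurable_subtype_coe measurableSet_Ico

lemma μ01_E0 : μ01 E0 = ENNReal.ofReal (1/4) := by
  rw [μ01_apply]; simp only [E0]; rw [Subtype.image_preimage_coe]
  have : Set.Ico (0:ℝ) 1 ∩ Set.Ico (0:ℝ) (1/4) = Set.Ico (0:ℝ) (1/4) := by
    apply Set.inter_eq_right.2
    intro x hx
    exact ⟨hx.1, by linarith [hx.2]⟩
  rw [this, Real.volume_Ico]
  norm_num

lemma preimage_E0 : ⇑halfRot ⁻¹' E0 = Subtype.val ⁻¹' Set.Ico (1/2:ℝ) (3/4) := by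
  ext ω
  simp only [Set.mem_preimage, E0, Set.mem_Ico]
  rw [show ((halfRot ω : ↥(Set.Ico (0:ℝ) 1)) : ℝ) = Int.fract (ω.1 + 1/2) from halfRot_apply ω]
  rcases lt_or_ge ω.1 (1/2) with h | h
  · rw [fract_lo ω.2.1 h]
    constructor
    · rintro ⟨h0, h1⟩; exact absurd h1 (by linarith [ω.2.1])
    · rintro ⟨h0, h1⟩; linarith
  · rw [fract_hi h ω.2.2]
    constructor
    · rintro ⟨h0, h1⟩; constructor <;> linarith
    · rintro ⟨h0, h1⟩; constructor <;> linarith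

lemma μ01_E0_union : μ01 (E0 ∪ ⇑halfRot ⁻¹' E0) = ENNReal.ofReal (1/2) := by
  rw [preimage_E0, μ01_apply]; simp only [E0]
  rw [Set.image_union, Subtype.image_preimage_coe, Subtype.image_preimage_coe]
  have h1 : Set.Ico (0:ℝ) 1 ∩ Set.Ico (0:ℝ) (1/4) = Set.Ico (0:ℝ) (1/4) :=
    Set.inter_eq_right.2 (fun x hx => ⟨hx.1, by linarith [hx.2]⟩)
  have h2 : Set.Ico (0:ℝ) 1 ∩ Set.Ico (1/2:ℝ) (3/4) = Set.Ico (1/2:ℝ) (3/4) :=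
    Set.inter_eq_right.2 (fun x hx => ⟨by linarith [hx.1], by linarith [hx.2]⟩)
  rw [h1, h2]
  rw [measure_union (by rw [Set.disjoint_left]; rintro x ⟨_, hx⟩ ⟨hy, _⟩; linarith)
    measurableSet_Ico]
  rw [Real.volume_Ico, Real.volume_Ico, ← ENNReal.ofReal_add (by norm_num) (by norm_num)]
  norm_num


lemma set_low {Ω : Type*} (T : Equiv.Perm Ω) (hT : T * T = 1) (E : Set Ω) {α : ℝ}
    (h0 : 0 < α) (h23 : α < 2/3) :
    {ω | α < ergMax T E ω} = E ∪ ⇑T ⁻¹' E := by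
  classical
  ext ω
  simp only [Set.mem_setOf_eq, Set.mem_union, Set.mem_preimage]
  rw [ergMax_eq T hT E ω]
  by_cases h1 : ω ∈ E
  · simp only [if_pos h1]
    constructor
    · intro _; exact Or.inl h1
    · intro _; linarith
  · rw [if_neg h1]
    by_cases h2 : T ω ∈ E
    · simp only [if_pos h2]
      constructor
      · intro _; exact Or.inr h2
      · intro _; linarith
    · simp only [if_neg h2]
      constructor
      · intro h; linarith
      · rintro (h | h)
        · exact absurd h h1
        · exact absurd h h2

lemma set_high {Ω : Type*} (T : Equiv.Perm Ω) (hT : T * T = 1) (E : Set Ω) {α : ℝ}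
    (h23 : 2/3 ≤ α) (h1 : α < 1) :
    {ω | α < ergMax T E ω} = E := by
  classical
  ext ω
  simp only [Set.mem_setOf_eq]
  rw [ergMax_eq T hT E ω]
  by_cases hω : ω ∈ E
  · simp only [if_pos hω]
    exact ⟨fun _ => hω, fun _ => h1⟩
  · rw [if_neg hω]
    by_cases h2 : T ω ∈ E
    · simp only [if_pos h2]
      exact ⟨fun h => absurd h (by linarith), fun h => absurd h hω⟩
    · simp only [if_neg h2]
      exact ⟨fun h => absurd h (by linarith), fun h => absurd h hω⟩

/-- For `T(x) = (x + 1/2) mod 1` on `[0,1)` with Lebesgue measure, `C*_T(α) = 2` for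
`0 < α < 2/3` and `C*_T(α) = 1` for `2/3 ≤ α < 1`. -/
theorem stmt1 (α : ℝ) :
    (0 < α → α < 2/3 → ergTauber μ01 halfRot α = 2) ∧
      (2/3 ≤ α → α < 1 → ergTauber μ01 halfRot α = 1) := by
  constructor
  · intro h0 h23
    unfold ergTauber
    apply le_antisymm
    · apply iSup_le
      rintro ⟨E, hEm, hEpos⟩
      rw [set_low halfRot halfRot_invol E h0 h23]
      apply ENNReal.div_le_of_le_mul
      calc μ01 (E ∪ ⇑halfRot ⁻¹' E) ≤ μ01 E + μ01 (⇑halfRot ⁻¹' E) := measure_union_le _ _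
        _ = μ01 E + μ01 E := by rw [μ01_preserve E hEm]
        _ = 2 * μ01 E := (two_mul _).symm
    · apply le_iSup_of_le ⟨E0, E0_meas, by rw [μ01_E0]; exact ENNReal.ofReal_pos.2 (by norm_num)⟩
      rw [set_low halfRot halfRot_invol E0 h0 h23, μ01_E0_union, μ01_E0,
        ← ENNReal.ofReal_div_of_pos (by norm_num)]
      norm_num
  · intro h23 h1
    unfold ergTauber
    apply le_antisymm
    · apply iSup_le
      rintro ⟨E, hEm, hEpos⟩
      rw [set_high halfRot halfRot_invol E h23 h1,
        ENNReal.div_self (ne_of_gt hEpos) (μ01_ne_top E)]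
    · apply le_iSup_of_le ⟨Set.univ, MeasurableSet.univ, by rw [μ01_univ]; exact one_pos⟩
      rw [set_high halfRot halfRot_invol Set.univ h23 h1,
        ENNReal.div_self (by rw [μ01_univ]; exact one_ne_zero) (μ01_ne_top _)]
end

section
/- In dimension n = 1, the Tauberian constant of the discrete (two-sided, uncentered) Hardy–Littlewood maximal operator on ℤ satisfies C̃_S(α) = 2/α − 1 for all α ∈ (0,1). -/
open MeasureTheory Set ENNReal

/-- The discrete two-sided (uncentered) Hardy–Littlewood maximal operator on `ℤ`
applied to `χ_E`. -/
noncomputable def dtsMax (E : Set ℤ) (m : ℤ) : ℝ :=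
  ⨆ p : {p : ℤ × ℤ // p.1 ≤ 0 ∧ 0 ≤ p.2},
    (∑ j ∈ Finset.Icc p.1.1 p.1.2, E.indicator (fun _ => (1:ℝ)) (m + j)) /
      ((p.1.2 : ℝ) - (p.1.1 : ℝ) + 1)

/-- The Tauberian constant of the discrete two-sided Hardy–Littlewood maximal operator. -/
noncomputable def dtsTauber (α : ℝ) : ℝ≥0∞ :=
  ⨆ E : {E : Set ℤ // E.Finite ∧ E.Nonempty},
    ({m : ℤ | α < dtsMax E.1 m}.encard : ℝ≥0∞) / (E.1.encard : ℝ≥0∞)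

open Filter Topology

/-- number of points of `F` in `[a,b]` -/
noncomputable def cnt (F : Finset ℤ) (a b : ℤ) : ℕ :=
  ((Finset.Icc a b).filter (fun x => x ∈ F)).card

/-- `[a,b]` is an admissible (density `> α`) interval for `F` -/
def Adm (α : ℝ) (F : Finset ℤ) (a b : ℤ) : Prop :=
  a ≤ b ∧ α * ((b : ℝ) - a + 1) < (cnt F a b : ℝ)

lemma cnt_le_card (F : Finset ℤ) (a b : ℤ) : cnt F a b ≤ F.card :=
  Finset.card_le_card (fun _ hx => (Finset.mem_filter.1 hx).2)

lemma cnt_le_len (F : Finset ℤ) {a b : ℤ} (hab : a ≤ b + 1) : (cnt F a b : ℤ) ≤ b - a + 1 := by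
  calc (cnt F a b : ℤ) ≤ ((Finset.Icc a b).card : ℤ) := by
        exact_mod_cast Finset.card_le_card (Finset.filter_subset _ _)
    _ ≤ b - a + 1 := by rw [Int.card_Icc]; omega

lemma cnt_mono_left (F : Finset ℤ) {a a' : ℤ} (b : ℤ) (h : a ≤ a') :
    cnt F a' b ≤ cnt F a b := by
  apply Finset.card_le_card
  intro x hx
  rcases Finset.mem_filter.1 hx with ⟨hx1, hx2⟩
  rcases Finset.mem_Icc.1 hx1 with ⟨h1, h2⟩
  exact Finset.mem_filter.2 ⟨Finset.mem_Icc.2 ⟨le_trans h h1, h2⟩, hx2⟩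

lemma cnt_split (F : Finset ℤ) {a c b : ℤ} (h1 : a ≤ c + 1) (h2 : c ≤ b) :
    cnt F a b = cnt F a c + cnt F (c + 1) b := by
  classical
  unfold cnt
  rw [← Finset.card_union_of_disjoint, ← Finset.filter_union]
  · congr 2
    apply Finset.ext
    intro x
    simp only [Finset.mem_union, Finset.mem_Icc]
    omega
  · apply Finset.disjoint_filter_filter
    rw [Finset.disjoint_left]
    intro x hx hx'
    rcases Finset.mem_Icc.1 hx with ⟨_, h⟩
    rcases Finset.mem_Icc.1 hx' with ⟨h', _⟩
    omega

lemma cnt_pos_of_adm {α : ℝ} (hα : 0 < α) {F : Finset ℤ} {a b : ℤ} (h : Adm α F a b) :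
    1 ≤ cnt F a b := by
  rcases h with ⟨hab, h⟩
  by_contra hc
  have h0 : cnt F a b = 0 := by omega
  rw [h0] at h
  have : (0:ℝ) < α * ((b:ℝ) - a + 1) := by
    apply mul_pos hα
    have : (a:ℝ) ≤ b := by exact_mod_cast hab
    linarith
  simp at h
  linarith

lemma exists_mem_of_adm {α : ℝ} (hα : 0 < α) {F : Finset ℤ} {a b : ℤ} (h : Adm α F a b) :
    ∃ f ∈ F, a ≤ f ∧ f ≤ b := by
  have h1 := cnt_pos_of_adm hα h
  have h2 : ((Finset.Icc a b).filter (fun x => x ∈ F)).Nonempty := by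
    rw [← Finset.card_pos]
    unfold cnt at h1
    omega
  rcases h2 with ⟨f, hf⟩
  rcases Finset.mem_filter.1 hf with ⟨hf1, hf2⟩
  rcases Finset.mem_Icc.1 hf1 with ⟨ha, hb⟩
  exact ⟨f, hf2, ha, hb⟩

lemma Adm_def (α : ℝ) (F : Finset ℤ) (a b : ℤ) :
    Adm α F a b ↔ a ≤ b ∧ α * ((b : ℝ) - a + 1) < (cnt F a b : ℝ) := Iff.rfl

lemma cnt_eq (F : Finset ℤ) (a b : ℤ) :
    cnt F a b = ((Finset.Icc a b).filter (fun x => x ∈ F)).card := rfl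

lemma adm_le_len {α : ℝ} (hα : 0 < α) {F : Finset ℤ} {a b : ℤ} (h : Adm α F a b) :
    (b : ℝ) - a + 1 < (F.card : ℝ) / α := by
  rw [Adm_def] at h
  rw [lt_div_iff₀ hα, mul_comm]
  calc α * ((b:ℝ) - a + 1) < (cnt F a b : ℝ) := h.2
    _ ≤ (F.card : ℝ) := by exact_mod_cast cnt_le_card F a b

lemma adm_bounds {α : ℝ} (hα : 0 < α) {F : Finset ℤ} (hF : F.Nonempty) {a b : ℤ}
    (h : Adm α F a b) :
    F.min' hF - ⌈(F.card : ℝ) / α⌉ ≤ a ∧ b ≤ F.max' hF + ⌈(F.card : ℝ) / α⌉ := by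
  obtain ⟨f, hfF, haf, hfb⟩ := exists_mem_of_adm hα h
  have h1 : ((b : ℝ) - a + 1) < (⌈(F.card : ℝ) / α⌉ : ℝ) :=
    lt_of_lt_of_le (adm_le_len hα h) (Int.le_ceil _)
  have h2 : b - a + 1 < ⌈(F.card : ℝ) / α⌉ := by exact_mod_cast h1
  have h3 : F.min' hF ≤ f := Finset.min'_le F f hfF
  have h4 : f ≤ F.max' hF := Finset.le_max' F f hfF
  omega

lemma step {α : ℝ} (hα : 0 < α) (hα1 : α ≤ 1) {F : Finset ℤ} {B : ℤ}
    (hB : ∀ ℓ r : ℤ, Adm α F ℓ r → r ≤ B)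
    (A : Set ℤ) (t : ℤ)
    (hA : ∀ x ∈ A, ∃ ℓ r, t ≤ ℓ ∧ Adm α F ℓ r ∧ ℓ ≤ x ∧ x ≤ r) :
    ∀ n : ℕ, ∀ a₀ m r : ℤ, a₀ ≤ m → m ≤ r →
    (∀ ℓ r'', t ≤ ℓ → Adm α F ℓ r'' → ℓ ≤ m → m ≤ r'' → r'' ≤ r) →
    α * ((r:ℝ) - a₀ + 1) ≤ (2 - α) * (cnt F a₀ r : ℝ) - (1 - α) * (cnt F (m+1) r : ℝ) →
    (B - r).toNat ≤ n →
    ∃ r', r ≤ r' ∧ (r' + 1) ∉ A ∧ α * ((r':ℝ) - a₀ + 1) ≤ (2 - α) * (cnt F a₀ r' : ℝ) := by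
  intro n
  induction n with
  | zero =>
    intro a₀ m r ham hmr hmax hinv hn
    by_cases hmem : (r + 1) ∈ A
    · exfalso
      obtain ⟨ℓ, r₂, hℓt, hadm, hℓ, hr₂⟩ := hA _ hmem
      have := hB ℓ r₂ hadm
      omega
    · refine ⟨r, le_refl r, hmem, ?_⟩
      have h0 : (0:ℝ) ≤ (1 - α) * (cnt F (m+1) r : ℝ) :=
        mul_nonneg (by linarith) (Nat.cast_nonneg _)
      linarith
  | succ n ih =>
    intro a₀ m r ham hmr hmax hinv hn
    by_cases hmem : (r + 1) ∈ A
    · have Hinh : ∃ r₂ : ℤ, ∃ ℓ, t ≤ ℓ ∧ Adm α F ℓ r₂ ∧ ℓ ≤ r + 1 ∧ r + 1 ≤ r₂ := by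
        obtain ⟨ℓ, r₂, hℓt, hadm, hℓ, hr₂⟩ := hA _ hmem
        exact ⟨r₂, ℓ, hℓt, hadm, hℓ, hr₂⟩
      have Hbdd : ∃ b : ℤ, ∀ z : ℤ, (∃ ℓ, t ≤ ℓ ∧ Adm α F ℓ z ∧ ℓ ≤ r + 1 ∧ r + 1 ≤ z) → z ≤ b :=
        ⟨B, fun z hz => hB _ z hz.choose_spec.2.1⟩
      obtain ⟨r₂, ⟨ℓ₂, hℓt, hadm₂, hℓ₂, hr₂⟩, hgreat⟩ := Int.exists_greatest_of_bdd Hbdd Hinh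
      -- left endpoint of the new interval is past m
      have hℓ₂m : m + 1 ≤ ℓ₂ := by
        by_contra hc
        push_neg at hc
        have h1 : m ≤ r₂ := by omega
        have := hmax ℓ₂ r₂ hℓt hadm₂ (by omega) h1
        omega
      have hadm₂' := (Adm_def α F ℓ₂ r₂).1 hadm₂
      -- split counts
      have f1 : cnt F a₀ r₂ = cnt F a₀ r + cnt F (r+1) r₂ := cnt_split F (by omega) (by omega)
      have f2 : cnt F ℓ₂ r₂ = cnt F ℓ₂ r + cnt F (r+1) r₂ := cnt_split F (by omega) (by omega)
      have f3 : cnt F ℓ₂ r ≤ cnt F (m+1) r := cnt_mono_left F r hℓ₂m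
      have f4 : ((cnt F ℓ₂ r : ℝ)) ≤ (r:ℝ) - ℓ₂ + 1 := by
        have := cnt_le_len F (a := ℓ₂) (b := r) (by omega)
        exact_mod_cast this
      have f5 : cnt F (r+1+1) r₂ ≤ cnt F (r+1) r₂ := cnt_mono_left F r₂ (by omega)
      have p1 : α * (cnt F ℓ₂ r : ℝ) ≤ α * ((r:ℝ) - ℓ₂ + 1) :=
        mul_le_mul_of_nonneg_left f4 hα.le
      have p2 : (1 - α) * (cnt F ℓ₂ r : ℝ) ≤ (1 - α) * (cnt F (m+1) r : ℝ) :=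
        mul_le_mul_of_nonneg_left (by exact_mod_cast f3) (by linarith)
      have p3 : (1 - α) * (cnt F (r+1+1) r₂ : ℝ) ≤ (1 - α) * (cnt F (r+1) r₂ : ℝ) :=
        mul_le_mul_of_nonneg_left (by exact_mod_cast f5) (by linarith)
      have f1' : (cnt F a₀ r₂ : ℝ) = (cnt F a₀ r : ℝ) + (cnt F (r+1) r₂ : ℝ) := by
        exact_mod_cast f1
      have f2' : (cnt F ℓ₂ r₂ : ℝ) = (cnt F ℓ₂ r : ℝ) + (cnt F (r+1) r₂ : ℝ) := by
        exact_mod_cast f2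
      have hadm2r : α * ((r₂:ℝ) - ℓ₂ + 1) < (cnt F ℓ₂ r : ℝ) + (cnt F (r+1) r₂ : ℝ) := by
        rw [← f2']; exact hadm₂'.2
      have hinv' : α * ((r₂:ℝ) - a₀ + 1) ≤
          (2 - α) * (cnt F a₀ r₂ : ℝ) - (1 - α) * (cnt F (r+1+1) r₂ : ℝ) := by
        rw [f1']
        have hr₂r : (r:ℝ) + 1 ≤ (r₂ : ℝ) := by exact_mod_cast hr₂
        nlinarith [hinv, hadm2r, p1, p2, p3]
      have hmax' : ∀ ℓ r'', t ≤ ℓ → Adm α F ℓ r'' → ℓ ≤ r + 1 → r + 1 ≤ r'' → r'' ≤ r₂ :=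
        fun ℓ r'' h1 h2 h3 h4 => hgreat r'' ⟨ℓ, h1, h2, h3, h4⟩
      have hn' : (B - r₂).toNat ≤ n := by
        have := hB ℓ₂ r₂ hadm₂
        omega
      obtain ⟨r', hrr', hnot, hfin⟩ := ih a₀ (r+1) r₂ (by omega) hr₂ hmax' hinv' hn'
      exact ⟨r', by omega, hnot, hfin⟩
    · refine ⟨r, le_refl r, hmem, ?_⟩
      have h0 : (0:ℝ) ≤ (1 - α) * (cnt F (m+1) r : ℝ) :=
        mul_nonneg (by linarith) (Nat.cast_nonneg _)
      linarith

lemma outer {α : ℝ} (hα : 0 < α) (hα1 : α ≤ 1) {F : Finset ℤ} {B : ℤ}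
    (hB : ∀ ℓ r : ℤ, Adm α F ℓ r → r ≤ B) :
    ∀ n : ℕ, ∀ (A : Finset ℤ) (t : ℤ), A.card ≤ n →
    (∀ m ∈ A, ∃ ℓ r, t ≤ ℓ ∧ Adm α F ℓ r ∧ ℓ ≤ m ∧ m ≤ r) →
    (∀ ℓ r, t ≤ ℓ → Adm α F ℓ r → ∀ x, ℓ ≤ x → x ≤ r → x ∈ A) →
    α * (A.card : ℝ) ≤ (2 - α) * ((F.filter (fun x => t ≤ x)).card : ℝ) := by
  intro n
  induction n with
  | zero =>
    intro A t hcard _ _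
    have : A.card = 0 := by omega
    rw [this]
    simp only [Nat.cast_zero, mul_zero]
    exact mul_nonneg (by linarith) (Nat.cast_nonneg _)
  | succ n ih =>
    intro A t hcard h1 h2
    classical
    rcases A.eq_empty_or_nonempty with hA | hne
    · rw [hA]
      simp only [Finset.card_empty, Nat.cast_zero, mul_zero]
      exact mul_nonneg (by linarith) (Nat.cast_nonneg _)
    set a₀ := A.min' hne with ha₀
    obtain ⟨ℓ₀, r₀, hℓ₀t, hadm₀, hℓ₀a, har₀⟩ := h1 a₀ (A.min'_mem hne)
    -- choose the admissible interval through a₀ with greatest right endpoint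
    have Hinh : ∃ z : ℤ, ∃ ℓ, t ≤ ℓ ∧ Adm α F ℓ z ∧ ℓ ≤ a₀ ∧ a₀ ≤ z :=
      ⟨r₀, ℓ₀, hℓ₀t, hadm₀, hℓ₀a, har₀⟩
    have Hbdd : ∃ b : ℤ, ∀ z : ℤ, (∃ ℓ, t ≤ ℓ ∧ Adm α F ℓ z ∧ ℓ ≤ a₀ ∧ a₀ ≤ z) → z ≤ b :=
      ⟨B, fun z hz => hB _ z hz.choose_spec.2.1⟩
    obtain ⟨r₁, ⟨ℓ₁, hℓ₁t, hadm₁, hℓ₁a, har₁⟩, hgreat⟩ := Int.exists_greatest_of_bdd Hbdd Hinh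
    have hadm₁' := (Adm_def α F ℓ₁ r₁).1 hadm₁
    -- ℓ₁ = a₀
    have hℓ₁A : ℓ₁ ∈ A := h2 ℓ₁ r₁ hℓ₁t hadm₁ ℓ₁ le_rfl hadm₁'.1
    have hℓ₁eq : ℓ₁ = a₀ := le_antisymm hℓ₁a (A.min'_le ℓ₁ hℓ₁A)
    have hta₀ : t ≤ a₀ := hℓ₁eq ▸ hℓ₁t
    -- base invariant
    have hbase : α * ((r₁:ℝ) - a₀ + 1) ≤
        (2 - α) * (cnt F a₀ r₁ : ℝ) - (1 - α) * (cnt F (a₀+1) r₁ : ℝ) := by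
      have hmono : cnt F (a₀+1) r₁ ≤ cnt F a₀ r₁ := cnt_mono_left F r₁ (by omega)
      have hmono' : (cnt F (a₀+1) r₁ : ℝ) ≤ (cnt F a₀ r₁ : ℝ) := by exact_mod_cast hmono
      have hadm2 : α * ((r₁:ℝ) - a₀ + 1) < (cnt F a₀ r₁ : ℝ) := by
        rw [← hℓ₁eq]; exact hadm₁'.2
      have hp : (1 - α) * (cnt F (a₀+1) r₁ : ℝ) ≤ (1 - α) * (cnt F a₀ r₁ : ℝ) :=
        mul_le_mul_of_nonneg_left hmono' (by linarith)
      linarith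
    have hmax₁ : ∀ ℓ r'', t ≤ ℓ → Adm α F ℓ r'' → ℓ ≤ a₀ → a₀ ≤ r'' → r'' ≤ r₁ :=
      fun ℓ r'' u1 u2 u3 u4 => hgreat r'' ⟨ℓ, u1, u2, u3, u4⟩
    have hAset : ∀ x ∈ (↑A : Set ℤ), ∃ ℓ r, t ≤ ℓ ∧ Adm α F ℓ r ∧ ℓ ≤ x ∧ x ≤ r := by
      intro x hx
      exact h1 x hx
    have ha₀r₁ : a₀ ≤ r₁ := hℓ₁eq ▸ hadm₁'.1
    obtain ⟨r', hr₁r', hnot, hfin⟩ :=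
      step hα hα1 hB (↑A : Set ℤ) t hAset (B - r₁).toNat a₀ a₀ r₁ le_rfl
        ha₀r₁ hmax₁ hbase le_rfl
    have hnotA : r' + 1 ∉ A := by simpa using hnot
    have ha₀r' : a₀ ≤ r' := le_trans ha₀r₁ hr₁r'
    -- split A
    set Ahi := A.filter (fun m => r' + 2 ≤ m) with hAhi
    have hsplit : A.card ≤ (r' - a₀ + 1).toNat + Ahi.card := by
      have e1 : (A.filter (fun m => ¬ r' + 2 ≤ m)).card + Ahi.card = A.card := by
        rw [hAhi, add_comm]
        exact Finset.card_filter_add_card_filter_not _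
      have e2 : A.filter (fun m => ¬ r' + 2 ≤ m) ⊆ Finset.Icc a₀ r' := by
        intro x hx
        rcases Finset.mem_filter.1 hx with ⟨hxA, hx2⟩
        have hax : a₀ ≤ x := A.min'_le x hxA
        have : x ≠ r' + 1 := fun h => hnotA (h ▸ hxA)
        rw [Finset.mem_Icc]
        omega
      have e3 : (A.filter (fun m => ¬ r' + 2 ≤ m)).card ≤ (r' - a₀ + 1).toNat := by
        calc (A.filter (fun m => ¬ r' + 2 ≤ m)).card ≤ (Finset.Icc a₀ r').card :=
              Finset.card_le_card e2
          _ = (r' + 1 - a₀).toNat := Int.card_Icc a₀ r'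
          _ = (r' - a₀ + 1).toNat := by congr 1; ring
      omega
    -- apply induction hypothesis to Ahi
    have hcard' : Ahi.card ≤ n := by
      have h₁ : a₀ ∈ A := A.min'_mem hne
      have h₂ : a₀ ∉ Ahi := by
        rw [hAhi, Finset.mem_filter]
        push_neg
        intro _
        omega
      have : Ahi ⊂ A := ⟨Finset.filter_subset _ _, fun hsub => h₂ (hsub h₁)⟩
      have := Finset.card_lt_card this
      omega
    have h1' : ∀ m ∈ Ahi, ∃ ℓ r, r' + 2 ≤ ℓ ∧ Adm α F ℓ r ∧ ℓ ≤ m ∧ m ≤ r := by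
      intro m hm
      rcases Finset.mem_filter.1 hm with ⟨hmA, hm2⟩
      obtain ⟨ℓ, r, hℓt, hadm, hℓm, hmr⟩ := h1 m hmA
      refine ⟨ℓ, r, ?_, hadm, hℓm, hmr⟩
      by_contra hc
      push_neg at hc
      exact hnotA (h2 ℓ r hℓt hadm (r' + 1) (by omega) (by omega))
    have h2' : ∀ ℓ r, r' + 2 ≤ ℓ → Adm α F ℓ r → ∀ x, ℓ ≤ x → x ≤ r → x ∈ Ahi := by
      intro ℓ r hℓ hadm x hx1 hx2
      rw [hAhi, Finset.mem_filter]
      exact ⟨h2 ℓ r (by omega) hadm x hx1 hx2, by omega⟩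
    have hih := ih Ahi (r' + 2) hcard' h1' h2'
    -- combine counts
    have hcnt : cnt F a₀ r' + (F.filter (fun x => r' + 2 ≤ x)).card ≤
        (F.filter (fun x => t ≤ x)).card := by
      rw [cnt_eq]
      rw [← Finset.card_union_of_disjoint]
      · apply Finset.card_le_card
        intro x hx
        rcases Finset.mem_union.1 hx with hx | hx
        · rcases Finset.mem_filter.1 hx with ⟨hx1, hx2⟩
          rcases Finset.mem_Icc.1 hx1 with ⟨u1, _⟩
          exact Finset.mem_filter.2 ⟨hx2, by omega⟩
        · rcases Finset.mem_filter.1 hx with ⟨hx1, hx2⟩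
          exact Finset.mem_filter.2 ⟨hx1, by omega⟩
      · rw [Finset.disjoint_left]
        intro x hx hx'
        rcases Finset.mem_Icc.1 (Finset.mem_filter.1 hx).1 with ⟨_, u2⟩
        have := (Finset.mem_filter.1 hx').2
        omega
    have hcnt' : (cnt F a₀ r' : ℝ) + ((F.filter (fun x => r' + 2 ≤ x)).card : ℝ) ≤
        ((F.filter (fun x => t ≤ x)).card : ℝ) := by exact_mod_cast hcnt
    have htoNat : (((r' - a₀ + 1).toNat : ℝ)) = (r' : ℝ) - a₀ + 1 := by
      have : ((r' - a₀ + 1).toNat : ℤ) = r' - a₀ + 1 := Int.toNat_of_nonneg (by omega)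
      exact_mod_cast this
    have hAcard : (A.card : ℝ) ≤ ((r' : ℝ) - a₀ + 1) + (Ahi.card : ℝ) := by
      rw [← htoNat]
      exact_mod_cast hsplit
    calc α * (A.card : ℝ) ≤ α * (((r' : ℝ) - a₀ + 1) + (Ahi.card : ℝ)) :=
          mul_le_mul_of_nonneg_left hAcard hα.le
      _ = α * ((r' : ℝ) - a₀ + 1) + α * (Ahi.card : ℝ) := by ring
      _ ≤ (2 - α) * (cnt F a₀ r' : ℝ) +
            (2 - α) * ((F.filter (fun x => r' + 2 ≤ x)).card : ℝ) := by linarith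
      _ = (2 - α) * ((cnt F a₀ r' : ℝ) + ((F.filter (fun x => r' + 2 ≤ x)).card : ℝ)) := by ring
      _ ≤ (2 - α) * ((F.filter (fun x => t ≤ x)).card : ℝ) :=
          mul_le_mul_of_nonneg_left hcnt' (by linarith)

lemma sum_indicator_eq (F : Finset ℤ) (m M N : ℤ) :
    (∑ j ∈ Finset.Icc M N, (↑F : Set ℤ).indicator (fun _ => (1:ℝ)) (m + j)) =
      (cnt F (m + M) (m + N) : ℝ) := by
  classical
  have h1 : ∀ j : ℤ, (↑F : Set ℤ).indicator (fun _ => (1:ℝ)) (m + j) =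
      if m + j ∈ F then (1:ℝ) else 0 := by
    intro j
    rw [Set.indicator_apply]
    simp
  simp only [h1]
  rw [Finset.sum_boole]
  norm_num
  unfold cnt
  apply Finset.card_bij (fun (j : ℤ) _ => m + j)
  · intro j hj
    rcases Finset.mem_filter.1 hj with ⟨hj1, hj2⟩
    rcases Finset.mem_Icc.1 hj1 with ⟨u1, u2⟩
    exact Finset.mem_filter.2 ⟨Finset.mem_Icc.2 ⟨by omega, by omega⟩, hj2⟩
  · intro j1 _ j2 _ h
    omega
  · intro x hx
    rcases Finset.mem_filter.1 hx with ⟨hx1, hx2⟩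
    rcases Finset.mem_Icc.1 hx1 with ⟨u1, u2⟩
    exact ⟨x - m, Finset.mem_filter.2 ⟨Finset.mem_Icc.2 ⟨by omega, by omega⟩, by
      simpa using hx2⟩, by omega⟩

lemma dtsMax_term_le (F : Finset ℤ) (m : ℤ) (p : {p : ℤ × ℤ // p.1 ≤ 0 ∧ 0 ≤ p.2}) :
    (∑ j ∈ Finset.Icc p.1.1 p.1.2, (↑F : Set ℤ).indicator (fun _ => (1:ℝ)) (m + j)) /
      ((p.1.2 : ℝ) - (p.1.1 : ℝ) + 1) ≤ (F.card : ℝ) := by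
  obtain ⟨⟨M, N⟩, hM, hN⟩ := p
  simp only
  rw [sum_indicator_eq]
  have hden : (1:ℝ) ≤ (N : ℝ) - (M : ℝ) + 1 := by
    have : (M:ℝ) ≤ 0 := by exact_mod_cast hM
    have : (0:ℝ) ≤ (N:ℝ) := by exact_mod_cast hN
    linarith
  calc (cnt F (m + M) (m + N) : ℝ) / ((N : ℝ) - (M : ℝ) + 1) ≤ (cnt F (m + M) (m + N) : ℝ) :=
        div_le_self (Nat.cast_nonneg _) hden
    _ ≤ (F.card : ℝ) := by exact_mod_cast cnt_le_card F (m + M) (m + N)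

lemma dtsMax_lt_iff {α : ℝ} (hα : 0 < α) (F : Finset ℤ) (m : ℤ) :
    α < dtsMax (↑F) m ↔ ∃ ℓ r, Adm α F ℓ r ∧ ℓ ≤ m ∧ m ≤ r := by
  constructor
  · intro h
    by_contra hc
    push_neg at hc
    have hle : dtsMax (↑F) m ≤ α := by
      apply Real.iSup_le _ hα.le
      intro p
      obtain ⟨⟨M, N⟩, hM, hN⟩ := p
      simp only
      rw [sum_indicator_eq]
      have hden : (0:ℝ) < (N : ℝ) - (M : ℝ) + 1 := by
        have h1 : (M:ℝ) ≤ 0 := by exact_mod_cast hM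
        have h2 : (0:ℝ) ≤ (N:ℝ) := by exact_mod_cast hN
        linarith
      rw [div_le_iff₀ hden]
      have hnadm := hc (m + M) (m + N)
      by_contra hlt
      push_neg at hlt
      have hadm : Adm α F (m + M) (m + N) := by
        refine ⟨by omega, ?_⟩
        have : ((m + N : ℤ) : ℝ) - ((m + M : ℤ) : ℝ) + 1 = (N : ℝ) - (M : ℝ) + 1 := by
          push_cast; ring
        rw [this]
        linarith [hlt]
      exact absurd (hnadm hadm (by omega)) (by omega)
    exact absurd h (not_lt.2 hle)
  · rintro ⟨ℓ, r, hadm, h1, h2⟩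
    have hp : (ℓ - m ≤ 0 ∧ 0 ≤ r - m) := ⟨by omega, by omega⟩
    set p : {p : ℤ × ℤ // p.1 ≤ 0 ∧ 0 ≤ p.2} := ⟨(ℓ - m, r - m), hp⟩ with hpdef
    have hval : (∑ j ∈ Finset.Icc p.1.1 p.1.2, (↑F : Set ℤ).indicator (fun _ => (1:ℝ)) (m + j)) /
        ((p.1.2 : ℝ) - (p.1.1 : ℝ) + 1) = (cnt F ℓ r : ℝ) / ((r : ℝ) - ℓ + 1) := by
      rw [hpdef]
      simp only
      rw [sum_indicator_eq]
      have e1 : m + (ℓ - m) = ℓ := by ring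
      have e2 : m + (r - m) = r := by ring
      rw [e1, e2]
      congr 1
      push_cast
      ring
    have hlt : α < (cnt F ℓ r : ℝ) / ((r : ℝ) - ℓ + 1) := by
      have hden : (0:ℝ) < (r : ℝ) - ℓ + 1 := by
        have : (ℓ:ℝ) ≤ r := by exact_mod_cast hadm.1
        linarith
      rw [lt_div_iff₀ hden]
      exact hadm.2
    calc α < (cnt F ℓ r : ℝ) / ((r : ℝ) - ℓ + 1) := hlt
      _ = _ := hval.symm
      _ ≤ dtsMax (↑F) m := by
          apply le_ciSup (f := fun p : {p : ℤ × ℤ // p.1 ≤ 0 ∧ 0 ≤ p.2} =>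
            (∑ j ∈ Finset.Icc p.1.1 p.1.2, (↑F : Set ℤ).indicator (fun _ => (1:ℝ)) (m + j)) /
              ((p.1.2 : ℝ) - (p.1.1 : ℝ) + 1))
          exact ⟨(F.card : ℝ), Set.forall_mem_range.2 (dtsMax_term_le F m)⟩

lemma level_finite {α : ℝ} (hα : 0 < α) {F : Finset ℤ} (hF : F.Nonempty) :
    {m : ℤ | α < dtsMax (↑F) m}.Finite := by
  apply Set.Finite.subset (Set.finite_Icc (F.min' hF - ⌈(F.card : ℝ) / α⌉)
    (F.max' hF + ⌈(F.card : ℝ) / α⌉))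
  intro m hm
  obtain ⟨ℓ, r, hadm, h1, h2⟩ := (dtsMax_lt_iff hα F m).1 hm
  obtain ⟨u1, u2⟩ := adm_bounds hα hF hadm
  exact Set.mem_Icc.2 ⟨by omega, by omega⟩

lemma key_upper {α : ℝ} (hα : 0 < α) (hα1 : α < 1) {F : Finset ℤ} (hF : F.Nonempty) :
    ({m : ℤ | α < dtsMax (↑F) m}.encard : ℝ≥0∞) ≤
      ENNReal.ofReal (2 / α - 1) * (F.card : ℝ≥0∞) := by
  classical
  set t := F.min' hF - ⌈(F.card : ℝ) / α⌉ with ht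
  set B := F.max' hF + ⌈(F.card : ℝ) / α⌉ with hB
  have hBadm : ∀ ℓ r : ℤ, Adm α F ℓ r → r ≤ B := fun ℓ r h => (adm_bounds hα hF h).2
  have hfin := level_finite hα hF
  set A := hfin.toFinset with hA
  have h1 : ∀ m ∈ A, ∃ ℓ r, t ≤ ℓ ∧ Adm α F ℓ r ∧ ℓ ≤ m ∧ m ≤ r := by
    intro m hm
    rw [hA, Set.Finite.mem_toFinset] at hm
    obtain ⟨ℓ, r, hadm, u1, u2⟩ := (dtsMax_lt_iff hα F m).1 hm
    exact ⟨ℓ, r, (adm_bounds hα hF hadm).1, hadm, u1, u2⟩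
  have h2 : ∀ ℓ r, t ≤ ℓ → Adm α F ℓ r → ∀ x, ℓ ≤ x → x ≤ r → x ∈ A := by
    intro ℓ r _ hadm x hx1 hx2
    rw [hA, Set.Finite.mem_toFinset]
    exact (dtsMax_lt_iff hα F x).2 ⟨ℓ, r, hadm, hx1, hx2⟩
  have hmain := outer hα hα1.le hBadm A.card A t le_rfl h1 h2
  have hfilter : ((F.filter (fun x => t ≤ x)).card : ℝ) ≤ (F.card : ℝ) := by
    exact_mod_cast Finset.card_le_card (Finset.filter_subset _ _)
  have hreal : (A.card : ℝ) ≤ (2 / α - 1) * (F.card : ℝ) := by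
    have he : 2 / α - 1 = (2 - α) / α := by field_simp
    rw [he, div_mul_eq_mul_div, le_div_iff₀ hα]
    have : α * (A.card : ℝ) ≤ (2 - α) * (F.card : ℝ) := by
      calc α * (A.card : ℝ) ≤ (2 - α) * ((F.filter (fun x => t ≤ x)).card : ℝ) := hmain
        _ ≤ (2 - α) * (F.card : ℝ) := mul_le_mul_of_nonneg_left hfilter (by linarith)
    linarith
  rw [hfin.encard_eq_coe_toFinset_card]
  have hofr : (0:ℝ) ≤ 2 / α - 1 := by
    rw [sub_nonneg, le_div_iff₀ hα]
    linarith
  calc ((A.card : ℕ∞) : ℝ≥0∞) = (A.card : ℝ≥0∞) := by simp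
    _ = ENNReal.ofReal (A.card : ℝ) := (ENNReal.ofReal_natCast _).symm
    _ ≤ ENNReal.ofReal ((2 / α - 1) * (F.card : ℝ)) := ENNReal.ofReal_le_ofReal hreal
    _ = ENNReal.ofReal (2 / α - 1) * ENNReal.ofReal ((F.card : ℝ)) :=
        ENNReal.ofReal_mul hofr
    _ = ENNReal.ofReal (2 / α - 1) * (F.card : ℝ≥0∞) := by rw [ENNReal.ofReal_natCast]

section lower
variable {α : ℝ}

lemma cnt_full (k : ℕ) {a b : ℤ} (ha : a ≤ 0) (hb : (k:ℤ) - 1 ≤ b) :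
    cnt (Finset.Icc (0:ℤ) ((k:ℤ) - 1)) a b = k := by
  unfold cnt
  have : (Finset.Icc a b).filter (fun x => x ∈ Finset.Icc (0:ℤ) ((k:ℤ)-1)) =
      Finset.Icc (0:ℤ) ((k:ℤ)-1) := by
    apply Finset.ext
    intro x
    simp only [Finset.mem_filter, Finset.mem_Icc]
    omega
  rw [this, Int.card_Icc]
  omega

lemma lower_mem (hα0 : 0 < α) (hα1 : α < 1) (k : ℕ) (hk : 1 ≤ k)
    (m : ℤ) (hm : (k:ℤ) - (⌈(k:ℝ)/α⌉ - 1) ≤ m ∧ m ≤ (⌈(k:ℝ)/α⌉ - 1) - 1) :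
    α < dtsMax (↑(Finset.Icc (0:ℤ) ((k:ℤ) - 1))) m := by
  set L : ℤ := ⌈(k:ℝ)/α⌉ - 1 with hL
  have hLlt : (L : ℝ) < (k:ℝ) / α := by
    rw [hL]
    push_cast
    have := Int.ceil_lt_add_one ((k:ℝ)/α)
    linarith
  have hαL : α * (L : ℝ) < (k:ℝ) := by
    have := mul_lt_mul_of_pos_left hLlt hα0
    rwa [mul_div_cancel₀ _ (ne_of_gt hα0)] at this
  have hkL : (k : ℤ) ≤ L := by
    have h1 : (k:ℝ) < (k:ℝ)/α := by
      rw [lt_div_iff₀ hα0]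
      nlinarith [show (1:ℝ) ≤ (k:ℝ) by exact_mod_cast hk]
    have h2 : (k:ℤ) < ⌈(k:ℝ)/α⌉ := by
      rw [Int.lt_ceil]
      exact_mod_cast h1
    omega
  rw [dtsMax_lt_iff hα0]
  rcases lt_or_ge m 0 with hneg | hpos
  · -- interval [m, k-1]
    refine ⟨m, (k:ℤ) - 1, ⟨by omega, ?_⟩, le_rfl, by omega⟩
    rw [cnt_full k (le_of_lt hneg) le_rfl]
    have h1 : (((k:ℤ) - 1 : ℤ) : ℝ) - (m : ℝ) + 1 = (k : ℝ) - m := by push_cast; ring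
    rw [h1]
    have h2 : (k : ℝ) - m ≤ (L : ℝ) := by
      have : (k : ℤ) - m ≤ L := by omega
      exact_mod_cast this
    calc α * ((k:ℝ) - m) ≤ α * (L:ℝ) := mul_le_mul_of_nonneg_left h2 hα0.le
      _ < (k:ℝ) := hαL
  · rcases le_or_gt m ((k:ℤ) - 1) with hsmall | hbig
    · -- singleton [m, m]
      refine ⟨m, m, ⟨le_rfl, ?_⟩, le_rfl, le_rfl⟩
      have hmem : m ∈ Finset.Icc (0:ℤ) ((k:ℤ)-1) := Finset.mem_Icc.2 ⟨hpos, hsmall⟩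
      have : cnt (Finset.Icc (0:ℤ) ((k:ℤ)-1)) m m = 1 := by
        unfold cnt
        rw [Finset.Icc_self]
        rw [Finset.filter_singleton]
        rw [if_pos hmem]
        simp
      rw [this]
      simp only [sub_self, Nat.cast_one]
      norm_num
      linarith
    · -- interval [0, m]
      refine ⟨0, m, ⟨by omega, ?_⟩, by omega, le_rfl⟩
      rw [cnt_full k le_rfl (by omega)]
      have h1 : (m : ℝ) - ((0:ℤ):ℝ) + 1 = (m:ℝ) + 1 := by push_cast; ring
      rw [h1]
      have h2 : (m : ℝ) + 1 ≤ (L : ℝ) := by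
        have : m + 1 ≤ L := by omega
        exact_mod_cast this
      calc α * ((m:ℝ) + 1) ≤ α * (L:ℝ) := mul_le_mul_of_nonneg_left h2 hα0.le
        _ < (k:ℝ) := hαL

lemma lower_bound (hα0 : 0 < α) (hα1 : α < 1) (k : ℕ) (hk : 1 ≤ k) :
    ENNReal.ofReal (2/α - 1 - 2/(k:ℝ)) ≤ dtsTauber α := by
  classical
  set L : ℤ := ⌈(k:ℝ)/α⌉ - 1 with hL
  set F : Finset ℤ := Finset.Icc (0:ℤ) ((k:ℤ) - 1) with hF
  have hFne : (↑F : Set ℤ).Nonempty := by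
    refine ⟨0, ?_⟩
    rw [hF]
    simp only [Finset.coe_Icc, Set.mem_Icc]
    omega
  have hstep : ({m : ℤ | α < dtsMax (↑F) m}.encard : ℝ≥0∞) / ((↑F : Set ℤ).encard : ℝ≥0∞) ≤
      dtsTauber α := by
    exact le_iSup (fun E : {E : Set ℤ // E.Finite ∧ E.Nonempty} =>
      ({m : ℤ | α < dtsMax E.1 m}.encard : ℝ≥0∞) / (E.1.encard : ℝ≥0∞))
      ⟨↑F, F.finite_toSet, hFne⟩
  refine le_trans ?_ hstep
  -- compute/estimate the two cardinalities
  have hkL : (k : ℤ) ≤ L := by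
    have h1 : (k:ℝ) < (k:ℝ)/α := by
      rw [lt_div_iff₀ hα0]
      nlinarith [show (1:ℝ) ≤ (k:ℝ) by exact_mod_cast hk]
    have h2 : (k:ℤ) < ⌈(k:ℝ)/α⌉ := by
      rw [Int.lt_ceil]
      exact_mod_cast h1
    omega
  have hEcard : ((↑F : Set ℤ).encard : ℝ≥0∞) = (k : ℝ≥0∞) := by
    rw [hF, Set.encard_coe_eq_coe_finsetCard, Int.card_Icc]
    have : ((k:ℤ) - 1 + 1 - 0).toNat = k := by omega
    rw [this]
    simp
  have hsub : Set.Icc ((k:ℤ) - L) (L - 1) ⊆ {m : ℤ | α < dtsMax (↑F) m} := by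
    intro m hm
    rcases Set.mem_Icc.1 hm with ⟨u1, u2⟩
    exact lower_mem hα0 hα1 k hk m ⟨u1, by omega⟩
  have hNcard : ((2*L - k).toNat : ℝ≥0∞) ≤ ({m : ℤ | α < dtsMax (↑F) m}.encard : ℝ≥0∞) := by
    have h1 : (Set.Icc ((k:ℤ) - L) (L - 1)).encard ≤ {m : ℤ | α < dtsMax (↑F) m}.encard :=
      Set.encard_le_encard hsub
    have h2 : (Set.Icc ((k:ℤ) - L) (L - 1)).encard = ((2*L - k).toNat : ℕ∞) := by
      rw [← Finset.coe_Icc, Set.encard_coe_eq_coe_finsetCard, Int.card_Icc]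
      congr 1
      omega
    rw [h2] at h1
    exact_mod_cast h1
  rw [hEcard]
  refine le_trans ?_ (ENNReal.div_le_div_right hNcard _)
  -- ofReal (2/α - 1 - 2/k) ≤ toNat(2L-k) / k
  rcases le_or_gt (2/α - 1 - 2/(k:ℝ)) 0 with hc | hc
  · rw [ENNReal.ofReal_eq_zero.2 hc]
    exact zero_le
  have hk0 : (k : ℝ≥0∞) ≠ 0 := Nat.cast_ne_zero.2 (by omega)
  rw [ENNReal.le_div_iff_mul_le (Or.inl hk0) (Or.inl (ENNReal.natCast_ne_top k))]
  have hco : ((k:ℝ≥0∞)) = ENNReal.ofReal ((k:ℝ)) := (ENNReal.ofReal_natCast k).symm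
  rw [hco, ← ENNReal.ofReal_mul hc.le]
  have harg : (2/α - 1 - 2/(k:ℝ)) * k ≤ ((2*L - k).toNat : ℝ) := by
    have hknz : (k:ℝ) ≠ 0 := by positivity
    have hceil : (k:ℝ)/α ≤ (⌈(k:ℝ)/α⌉ : ℝ) := Int.le_ceil _
    have htn : ((2*L - k).toNat : ℝ) = 2*(L:ℝ) - k := by
      have h0 : ((2*L - k).toNat : ℤ) = 2*L - k := Int.toNat_of_nonneg (by omega)
      have := congrArg (fun z : ℤ => (z : ℝ)) h0
      push_cast at this ⊢
      linarith [this]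
    rw [htn]
    have hLr : (L : ℝ) = (⌈(k:ℝ)/α⌉ : ℝ) - 1 := by rw [hL]; push_cast; ring
    rw [hLr]
    have hexp : (2/α - 1 - 2/(k:ℝ)) * k = 2*((k:ℝ)/α) - k - 2 := by
      field_simp
    rw [hexp]
    linarith
  calc ENNReal.ofReal ((2/α - 1 - 2/(k:ℝ)) * k) ≤ ENNReal.ofReal (((2*L - k).toNat : ℝ)) :=
        ENNReal.ofReal_le_ofReal harg
    _ = ((2*L - k).toNat : ℝ≥0∞) := ENNReal.ofReal_natCast _

end lower

/-- In dimension one, the Tauberian constant of the discrete (two-sided, uncentered)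
Hardy–Littlewood maximal operator satisfies `C̃_S(α) = 2/α − 1` for all `α ∈ (0,1)`. -/
theorem stmt4 (α : ℝ) (hα : α ∈ Set.Ioo (0:ℝ) 1) :
    dtsTauber α = ENNReal.ofReal (2 / α - 1) := by
  obtain ⟨hα0, hα1⟩ := hα
  apply le_antisymm
  · -- upper bound
    apply iSup_le
    rintro ⟨E, hEfin, hEne⟩
    have hcoe : (↑hEfin.toFinset : Set ℤ) = E := hEfin.coe_toFinset
    have hFne : hEfin.toFinset.Nonempty := by
      obtain ⟨x, hx⟩ := hEne
      exact ⟨x, hEfin.mem_toFinset.2 hx⟩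
    simp only
    rw [← hcoe]
    rw [Set.encard_coe_eq_coe_finsetCard]
    have hcast : (((hEfin.toFinset.card : ℕ∞)) : ℝ≥0∞) = (hEfin.toFinset.card : ℝ≥0∞) := by
      simp
    rw [hcast]
    exact ENNReal.div_le_of_le_mul (key_upper hα0 hα1 hFne)
  · -- lower bound via limit
    have htend : Tendsto (fun k : ℕ => ENNReal.ofReal (2/α - 1 - 2/(k:ℝ))) atTop
        (𝓝 (ENNReal.ofReal (2/α - 1))) := by
      have t1 : Tendsto (fun k : ℕ => 2/α - 1 - 2/(k:ℝ)) atTop (𝓝 (2/α - 1 - 0)) :=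
        tendsto_const_nhds.sub (tendsto_const_div_atTop_nhds_zero_nat 2)
      rw [sub_zero] at t1
      exact (ENNReal.continuous_ofReal.tendsto _).comp t1
    apply le_of_tendsto htend
    filter_upwards [eventually_ge_atTop 1] with k hk
    exact lower_bound hα0 hα1 k hk
end

section
/- Let U₁, …, Uₙ be commuting invertible measure preserving transformations on a probability space (Ω, Σ, μ). Then for every α ∈ (0,1), the ergodic Tauberian constant is bounded by the discrete one: C*_S(α) ≤ C̃_S(α). -/
open MeasureTheory Set ENNReal

/-- The discrete strong maximal operator `M̃_S` on `ℤⁿ` applied to `χ_E`: the supremum of the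
averages of `χ_E(m + ·)` over all integer boxes `[M, N]` with `M ≤ 0 ≤ N` (these are exactly the
sets `R ∩ ℤⁿ` for `R` an open axis-parallel rectangle containing the origin). -/
noncomputable def discStrongMax {n : ℕ} (E : Set (Fin n → ℤ)) (m : Fin n → ℤ) : ℝ :=
  ⨆ p : {p : (Fin n → ℤ) × (Fin n → ℤ) // p.1 ≤ 0 ∧ 0 ≤ p.2},
    (∑ j ∈ Finset.Icc p.1.1 p.1.2, E.indicator (fun _ => (1:ℝ)) (m + j)) /
      (Finset.Icc p.1.1 p.1.2).card

/-- The Tauberian constant `C̃_S(α)` of the discrete strong maximal operator. -/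
noncomputable def discStrongTauber (n : ℕ) (α : ℝ) : ℝ≥0∞ :=
  ⨆ E : {E : Set (Fin n → ℤ) // E.Finite ∧ E.Nonempty},
    ({m : Fin n → ℤ | α < discStrongMax E.1 m}.encard : ℝ≥0∞) / (E.1.encard : ℝ≥0∞)
/-- The composition `U₁^{j₁} ⋯ Uₙ^{jₙ}` of the commuting transformations `U i`. -/
noncomputable def prodPow {Ω : Type*} {n : ℕ} (U : Fin n → Equiv.Perm Ω) (j : Fin n → ℤ) :
    Equiv.Perm Ω :=
  (List.ofFn fun i => (U i) ^ (j i)).prod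

/-- The strong ergodic maximal operator `M*_S` applied to `χ_E`. -/
noncomputable def ergStrongMax {Ω : Type*} {n : ℕ} (U : Fin n → Equiv.Perm Ω) (E : Set Ω)
    (ω : Ω) : ℝ :=
  ⨆ p : {p : (Fin n → ℤ) × (Fin n → ℤ) // p.1 ≤ 0 ∧ 0 ≤ p.2},
    (∑ j ∈ Finset.Icc p.1.1 p.1.2, E.indicator (fun _ => (1:ℝ)) (prodPow U j ω)) /
      (Finset.Icc p.1.1 p.1.2).card

/-- The Tauberian constant `C*_S(α)` of the strong ergodic maximal operator. -/
noncomputable def ergStrongTauber {Ω : Type*} [MeasurableSpace Ω] (μ : Measure Ω) {n : ℕ}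
    (U : Fin n → Equiv.Perm Ω) (α : ℝ) : ℝ≥0∞ :=
  ⨆ E : {E : Set Ω // MeasurableSet E ∧ 0 < μ E}, μ {ω | α < ergStrongMax U E.1 ω} / μ E.1

section AuxLemmas

variable {Ω : Type*}

instance boxIndexNonempty {n : ℕ} :
    Nonempty {p : (Fin n → ℤ) × (Fin n → ℤ) // p.1 ≤ 0 ∧ 0 ≤ p.2} :=
  ⟨⟨(0, 0), le_refl _, le_refl _⟩⟩

section MP
variable [MeasurableSpace Ω] {μ : Measure Ω}

lemma listProd_mp : ∀ l : List (Equiv.Perm Ω), (∀ e ∈ l, MeasurePreserving ⇑e μ μ) →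
    MeasurePreserving ⇑l.prod μ μ
  | [], _ => by simpa using MeasurePreserving.id μ
  | (a :: l), h => by
    have h1 := h a List.mem_cons_self
    have h2 := listProd_mp l (fun e he => h e (List.mem_cons_of_mem _ he))
    have : ⇑(a :: l).prod = ⇑a ∘ ⇑l.prod := by
      ext x; simp [List.prod_cons, Equiv.Perm.mul_apply]
    rw [this]; exact h1.comp h2

lemma mp_pow (e : Equiv.Perm Ω) (h : MeasurePreserving ⇑e μ μ) (k : ℕ) :
    MeasurePreserving ⇑(e ^ k) μ μ := by
  induction k with
  | zero => simpa using MeasurePreserving.id μ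
  | succ k ih =>
    have : ⇑(e ^ (k+1)) = ⇑(e ^ k) ∘ ⇑e := by
      ext x; simp [pow_succ, Equiv.Perm.mul_apply]
    rw [this]; exact ih.comp h

lemma mp_zpow (e : Equiv.Perm Ω) (h : MeasurePreserving ⇑e μ μ)
    (h' : MeasurePreserving ⇑e.symm μ μ) (z : ℤ) : MeasurePreserving ⇑(e ^ z) μ μ := by
  cases z with
  | ofNat k => rw [Int.ofNat_eq_coe, zpow_natCast]; exact mp_pow e h k
  | negSucc k =>
    rw [zpow_negSucc, ← inv_pow]
    have : ⇑(e⁻¹) = ⇑e.symm := rfl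
    exact mp_pow e⁻¹ (by rw [this]; exact h') (k+1)

lemma prodPow_mp {n : ℕ} (U : Fin n → Equiv.Perm Ω)
    (hU : ∀ i, MeasurePreserving (⇑(U i)) μ μ)
    (hU' : ∀ i, MeasurePreserving (⇑(U i).symm) μ μ) (j : Fin n → ℤ) :
    MeasurePreserving (⇑(prodPow U j)) μ μ := by
  apply listProd_mp
  intro e he
  rw [List.mem_ofFn] at he
  obtain ⟨i, rfl⟩ := he
  exact mp_zpow _ (hU i) (hU' i) _

end MP

lemma prodPow_add : ∀ {n : ℕ} (U : Fin n → Equiv.Perm Ω),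
    (∀ i j, Commute (U i) (U j)) → ∀ a b : Fin n → ℤ,
    prodPow U (a + b) = prodPow U a * prodPow U b := by
  intro n
  induction n with
  | zero => intro U _ a b; simp [prodPow]
  | succ n ih =>
    intro U hcomm a b
    have hsplit : ∀ j : Fin (n+1) → ℤ,
        prodPow U j = U 0 ^ (j 0) * prodPow (fun i => U i.succ) (fun i => j i.succ) := by
      intro j
      simp [prodPow, List.ofFn_succ, List.prod_cons]
    have hcomm' : ∀ i k : Fin n, Commute ((fun i => U i.succ) i) ((fun i => U i.succ) k) :=
      fun i k => hcomm _ _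
    have IH := ih (fun i => U i.succ) hcomm' (fun i => a i.succ) (fun i => b i.succ)
    have hab : (fun i : Fin n => (a + b) i.succ) = (fun i => a i.succ) + (fun i => b i.succ) := rfl
    rw [hsplit, hsplit, hsplit]
    have hre : prodPow (fun i => U i.succ) (fun i => (a+b) i.succ)
        = prodPow (fun i => U i.succ) (fun i => a i.succ)
          * prodPow (fun i => U i.succ) (fun i => b i.succ) := by rw [hab, IH]
    rw [hre]
    have hc : Commute (U 0 ^ (b 0)) (prodPow (fun i => U i.succ) (fun i => a i.succ)) := by
      apply Commute.list_prod_right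
      intro x hx
      rw [List.mem_ofFn] at hx
      obtain ⟨i, rfl⟩ := hx
      exact (hcomm 0 i.succ).zpow_zpow _ _
    have hab0 : (a + b) 0 = a 0 + b 0 := rfl
    rw [hab0, zpow_add]
    set Pa := prodPow (fun i => U i.succ) (fun i => a i.succ)
    set Pb := prodPow (fun i => U i.succ) (fun i => b i.succ)
    calc U 0 ^ a 0 * U 0 ^ b 0 * (Pa * Pb)
        = U 0 ^ a 0 * (U 0 ^ b 0 * Pa) * Pb := by simp [mul_assoc]
      _ = U 0 ^ a 0 * (Pa * U 0 ^ b 0) * Pb := by rw [hc.eq]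
      _ = U 0 ^ a 0 * Pa * (U 0 ^ b 0 * Pb) := by simp [mul_assoc]

lemma prodPow_apply_apply {n : ℕ} (U : Fin n → Equiv.Perm Ω)
    (hcomm : ∀ i j, Commute (U i) (U j)) (a b : Fin n → ℤ) (ω : Ω) :
    prodPow U a (prodPow U b ω) = prodPow U (a + b) ω := by
  rw [prodPow_add U hcomm a b]; rfl

lemma indicator_le_one' {X : Type*} (E : Set X) (x : X) :
    E.indicator (fun _ => (1:ℝ)) x ≤ 1 := by
  classical
  rw [Set.indicator_apply]; split <;> norm_num

lemma indicator_nonneg' {X : Type*} (E : Set X) (x : X) :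
    0 ≤ E.indicator (fun _ => (1:ℝ)) x := by
  classical
  rw [Set.indicator_apply]; split <;> norm_num

lemma avg_le_one {X ι : Type*} (E : Set X) (s : Finset ι) (g : ι → X) :
    (∑ j ∈ s, E.indicator (fun _ => (1:ℝ)) (g j)) / s.card ≤ 1 := by
  rcases Nat.eq_zero_or_pos s.card with h | h
  · rw [h]; simp
  · rw [div_le_one (by exact_mod_cast h)]
    calc (∑ j ∈ s, E.indicator (fun _ => (1:ℝ)) (g j)) ≤ ∑ _j ∈ s, 1 :=
          Finset.sum_le_sum (fun j _ => indicator_le_one' E (g j))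
      _ = s.card := by simp

end AuxLemmas

/-- For commuting invertible measure preserving transformations `U₁, …, Uₙ` on a probability
space, the ergodic Tauberian constant is bounded by the discrete one: `C*_S(α) ≤ C̃_S(α)`. -/
theorem stmt5 {Ω : Type*} [MeasurableSpace Ω] (μ : Measure Ω) [IsProbabilityMeasure μ]
    (n : ℕ) (U : Fin n → Equiv.Perm Ω)
    (hU : ∀ i, MeasurePreserving (⇑(U i)) μ μ)
    (hU' : ∀ i, MeasurePreserving (⇑(U i).symm) μ μ)
    (hcomm : ∀ i j, Commute (U i) (U j))
    (α : ℝ) (hα : α ∈ Set.Ioo (0:ℝ) 1) :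
    ergStrongTauber μ U α ≤ discStrongTauber n α := by
  classical
  obtain ⟨hα0, _hα1⟩ := hα
  rw [ergStrongTauber]
  apply iSup_le
  rintro ⟨E, hE, hE0⟩
  rw [ENNReal.div_le_iff hE0.ne' (measure_ne_top μ E)]
  -- the averaging function
  set avg : (Fin n → ℤ) → (Fin n → ℤ) → Ω → ℝ := fun M N ω =>
    (∑ j ∈ Finset.Icc M N, E.indicator (fun _ => (1:ℝ)) (prodPow U j ω)) /
      (Finset.Icc M N).card with havg
  have havgmeas : ∀ M N, Measurable (avg M N) := by
    intro M N
    apply Measurable.div_const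
    apply Finset.measurable_sum
    intro j _
    have h1 : (fun ω => E.indicator (fun _ => (1:ℝ)) (prodPow U j ω))
        = ((prodPow U j) ⁻¹' E).indicator (fun _ => (1:ℝ)) := by
      ext ω; simp [Set.indicator_apply, Set.mem_preimage]
    rw [h1]
    exact Measurable.indicator measurable_const ((prodPow_mp U hU hU' j).measurable hE)
  -- truncated level sets
  set A : ℕ → Set Ω := fun K =>
    {ω | ∃ M N : Fin n → ℤ, M ≤ 0 ∧ 0 ≤ N ∧ (∀ i, -(K:ℤ) ≤ M i) ∧ (∀ i, N i ≤ (K:ℤ)) ∧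
      α < avg M N ω} with hA
  have hAmeas : ∀ K, MeasurableSet (A K) := by
    intro K
    have : A K = ⋃ (M : Fin n → ℤ), ⋃ (N : Fin n → ℤ),
        ⋃ (_ : M ≤ 0 ∧ 0 ≤ N ∧ (∀ i, -(K:ℤ) ≤ M i) ∧ (∀ i, N i ≤ (K:ℤ))),
          {ω | α < avg M N ω} := by
      ext ω
      simp only [hA, Set.mem_setOf_eq, Set.mem_iUnion]
      constructor
      · rintro ⟨M, N, h1, h2, h3, h4, h5⟩; exact ⟨M, N, ⟨h1, h2, h3, h4⟩, h5⟩
      · rintro ⟨M, N, ⟨h1, h2, h3, h4⟩, h5⟩; exact ⟨M, N, h1, h2, h3, h4, h5⟩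
    rw [this]
    exact MeasurableSet.iUnion fun M => MeasurableSet.iUnion fun N =>
      MeasurableSet.iUnion fun _ => measurableSet_lt measurable_const (havgmeas M N)
  have hAunion : {ω | α < ergStrongMax U E ω} = ⋃ K, A K := by
    ext ω
    have herg : ergStrongMax U E ω
        = ⨆ p : {p : (Fin n → ℤ) × (Fin n → ℤ) // p.1 ≤ 0 ∧ 0 ≤ p.2}, avg p.1.1 p.1.2 ω := rfl
    have hbdd : BddAbove (Set.range
        (fun p : {p : (Fin n → ℤ) × (Fin n → ℤ) // p.1 ≤ 0 ∧ 0 ≤ p.2} => avg p.1.1 p.1.2 ω)) :=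
      ⟨1, by rintro x ⟨p, rfl⟩; exact avg_le_one _ _ _⟩
    simp only [Set.mem_setOf_eq, Set.mem_iUnion, herg, lt_ciSup_iff hbdd]
    constructor
    · rintro ⟨⟨⟨M, N⟩, hM0, hN0⟩, hlt⟩
      refine ⟨Finset.univ.sup (fun i => (M i).natAbs ⊔ (N i).natAbs), M, N, hM0, hN0, ?_, ?_, hlt⟩
      · intro i
        have h0 : ((M i).natAbs ⊔ (N i).natAbs)
            ≤ Finset.univ.sup (fun i => (M i).natAbs ⊔ (N i).natAbs) :=
          Finset.le_sup (f := fun i => (M i).natAbs ⊔ (N i).natAbs) (Finset.mem_univ i)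
        have h1 : (M i).natAbs ≤ Finset.univ.sup (fun i => (M i).natAbs ⊔ (N i).natAbs) :=
          le_trans le_sup_left h0
        omega
      · intro i
        have h0 : ((M i).natAbs ⊔ (N i).natAbs)
            ≤ Finset.univ.sup (fun i => (M i).natAbs ⊔ (N i).natAbs) :=
          Finset.le_sup (f := fun i => (M i).natAbs ⊔ (N i).natAbs) (Finset.mem_univ i)
        have h1 : (N i).natAbs ≤ Finset.univ.sup (fun i => (M i).natAbs ⊔ (N i).natAbs) :=
          le_trans le_sup_right h0
        omega
    · rintro ⟨K, M, N, hM0, hN0, _, _, hlt⟩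
      exact ⟨⟨⟨M, N⟩, hM0, hN0⟩, hlt⟩
  have hAmono : Monotone A := by
    intro K K' hKK ω hω
    obtain ⟨M, N, h1, h2, h3, h4, h5⟩ := hω
    refine ⟨M, N, h1, h2, fun i => le_trans ?_ (h3 i), fun i => le_trans (h4 i) ?_, h5⟩
    · have : (K:ℤ) ≤ K' := by exact_mod_cast hKK
      omega
    · exact_mod_cast hKK
  have hKey : ∀ K, μ (A K) ≤ discStrongTauber n α * μ E := by
    intro K
    by_cases hC : discStrongTauber n α = ⊤
    · rw [hC, ENNReal.top_mul hE0.ne']; exact le_top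
    have hmeasA := hAmeas K
    have key : ∀ t : ℕ,
        (((2*t+1)^n : ℕ) : ℝ≥0∞) * μ (A K)
          ≤ (discStrongTauber n α * μ E) * (((2*(t+K)+1)^n : ℕ) : ℝ≥0∞) := by
      intro t
      set Bm : Finset (Fin n → ℤ) := Finset.Icc (fun _ => -(t:ℤ)) (fun _ => (t:ℤ)) with hBm
      set Bj : Finset (Fin n → ℤ) :=
        Finset.Icc (fun _ => -((t:ℤ)+K)) (fun _ => (t:ℤ)+K) with hBj
      have cardBm : Bm.card = (2*t+1)^n := by
        rw [hBm, Pi.card_Icc, Finset.prod_const, Finset.card_univ, Fintype.card_fin]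
        congr 1
        rw [Int.card_Icc]
        omega
      have cardBj : Bj.card = (2*(t+K)+1)^n := by
        rw [hBj, Pi.card_Icc, Finset.prod_const, Finset.card_univ, Fintype.card_fin]
        congr 1
        rw [Int.card_Icc]
        omega
      -- pointwise transference estimate
      have point : ∀ ω, (∑ m ∈ Bm, (A K).indicator (fun _ => (1:ℝ≥0∞)) (prodPow U m ω))
          ≤ discStrongTauber n α
            * ∑ j ∈ Bj, E.indicator (fun _ => (1:ℝ≥0∞)) (prodPow U j ω) := by
        intro ω
        have sum_eq : ∀ (B : Finset (Fin n → ℤ)) (P : Set Ω),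
            (∑ m ∈ B, P.indicator (fun _ => (1:ℝ≥0∞)) (prodPow U m ω))
              = ((B.filter (fun m => prodPow U m ω ∈ P)).card : ℝ≥0∞) := by
          intro B P
          rw [← Finset.sum_boole]
          exact Finset.sum_congr rfl fun m _ => by rw [Set.indicator_apply]
        rw [sum_eq Bm (A K), sum_eq Bj E]
        set S : Finset (Fin n → ℤ) := Bm.filter (fun m => prodPow U m ω ∈ A K) with hS
        set F : Finset (Fin n → ℤ) := Bj.filter (fun j => prodPow U j ω ∈ E) with hF
        rcases Finset.eq_empty_or_nonempty S with hSe | hSne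
        · rw [hSe]; simp
        obtain ⟨m0, hm0⟩ := hSne
        have hsub : ∀ m ∈ S, α < discStrongMax (↑F : Set (Fin n → ℤ)) m := by
          intro m hm
          rw [hS, Finset.mem_filter] at hm
          obtain ⟨hmB, hmA⟩ := hm
          obtain ⟨M, N, hM0, hN0, hMK, hNK, hlt⟩ := hmA
          have hmB' := Finset.mem_Icc.mp hmB
          have hterm : ∀ j ∈ Finset.Icc M N,
              E.indicator (fun _ => (1:ℝ)) (prodPow U j (prodPow U m ω))
                = (↑F : Set (Fin n → ℤ)).indicator (fun _ => (1:ℝ)) (m + j) := by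
            intro j hj
            have hj' := Finset.mem_Icc.mp hj
            have hmemBj : m + j ∈ Bj := by
              rw [hBj, Finset.mem_Icc]
              refine ⟨fun i => ?_, fun i => ?_⟩
              · have c1 : -(t:ℤ) ≤ m i := hmB'.1 i
                have c2 : M i ≤ j i := hj'.1 i
                have c3 : -(K:ℤ) ≤ M i := hMK i
                show -((t:ℤ)+(K:ℤ)) ≤ m i + j i
                omega
              · have c1 : m i ≤ (t:ℤ) := hmB'.2 i
                have c2 : j i ≤ N i := hj'.2 i
                have c3 : N i ≤ (K:ℤ) := hNK i
                show m i + j i ≤ (t:ℤ)+(K:ℤ)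
                omega
            rw [prodPow_apply_apply U hcomm j m ω]
            have hiff : prodPow U (j + m) ω ∈ E ↔ (m + j) ∈ (↑F : Set (Fin n → ℤ)) := by
              rw [add_comm j m]
              simp [hF, Finset.mem_coe, Finset.mem_filter, hmemBj]
            simp only [Set.indicator_apply]
            by_cases hcc : prodPow U (j+m) ω ∈ E
            · rw [if_pos hcc, if_pos (hiff.mp hcc)]
            · rw [if_neg hcc, if_neg (fun h => hcc (hiff.mpr h))]
          have hbdd : BddAbove (Set.range
              (fun p : {p : (Fin n → ℤ) × (Fin n → ℤ) // p.1 ≤ 0 ∧ 0 ≤ p.2} =>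
              (∑ j ∈ Finset.Icc p.1.1 p.1.2,
                  (↑F : Set (Fin n → ℤ)).indicator (fun _ => (1:ℝ)) (m + j)) /
                (Finset.Icc p.1.1 p.1.2).card)) :=
            ⟨1, by rintro x ⟨p, rfl⟩; exact avg_le_one _ _ _⟩
          have heqavg : avg M N (prodPow U m ω)
              = (∑ j ∈ Finset.Icc M N,
                  (↑F : Set (Fin n → ℤ)).indicator (fun _ => (1:ℝ)) (m + j)) /
                (Finset.Icc M N).card := by
            simp only [havg]
            congr 1
            exact Finset.sum_congr rfl hterm
          have hle : avg M N (prodPow U m ω) ≤ discStrongMax (↑F : Set (Fin n → ℤ)) m := by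
            rw [heqavg]
            exact le_ciSup hbdd ⟨(M, N), hM0, hN0⟩
          exact lt_of_lt_of_le hlt hle
        have hFne : F.Nonempty := by
          by_contra hemp
          rw [Finset.not_nonempty_iff_eq_empty] at hemp
          have h0 := hsub m0 hm0
          rw [hemp] at h0
          have hzero : discStrongMax (↑(∅ : Finset (Fin n → ℤ)) : Set (Fin n → ℤ)) m0 = 0 := by
            simp [discStrongMax]
          rw [hzero] at h0
          linarith
        have h1 : ((↑S : Set (Fin n → ℤ))).encard
            ≤ {m | α < discStrongMax (↑F : Set (Fin n → ℤ)) m}.encard :=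
          Set.encard_mono (fun m hm => hsub m hm)
        have h2 : ({m | α < discStrongMax (↑F : Set (Fin n → ℤ)) m}.encard)
            / ((↑F : Set (Fin n → ℤ)).encard) ≤ discStrongTauber n α := by
          rw [discStrongTauber]
          exact le_iSup (fun G : {G : Set (Fin n → ℤ) // G.Finite ∧ G.Nonempty} =>
            ({m | α < discStrongMax G.1 m}.encard : ℝ≥0∞) / (G.1.encard : ℝ≥0∞))
            ⟨↑F, F.finite_toSet, Finset.coe_nonempty.mpr hFne⟩
        rw [Set.encard_coe_eq_coe_finsetCard F, ENat.toENNReal_coe] at h2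
        have hFc0 : (F.card : ℝ≥0∞) ≠ 0 := by exact_mod_cast hFne.card_pos.ne'
        have h3 := (ENNReal.div_le_iff hFc0 (natCast_ne_top _)).mp h2
        calc (S.card : ℝ≥0∞)
            = (((↑S : Set (Fin n → ℤ))).encard : ℝ≥0∞) := by
              rw [Set.encard_coe_eq_coe_finsetCard S, ENat.toENNReal_coe]
          _ ≤ (({m | α < discStrongMax (↑F : Set (Fin n → ℤ)) m}.encard : ℕ∞) : ℝ≥0∞) :=
              ENat.toENNReal_le.mpr h1
          _ ≤ discStrongTauber n α * F.card := h3
      -- integration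
      have meas_g : ∀ (P : Set Ω), MeasurableSet P → ∀ j : Fin n → ℤ,
          Measurable (fun ω => P.indicator (fun _ => (1:ℝ≥0∞)) (prodPow U j ω)) := by
        intro P hP j
        have h1 : (fun ω => P.indicator (fun _ => (1:ℝ≥0∞)) (prodPow U j ω))
            = ((prodPow U j) ⁻¹' P).indicator (fun _ => (1:ℝ≥0∞)) := by
          ext ω; simp [Set.indicator_apply, Set.mem_preimage]
        rw [h1]
        exact Measurable.indicator measurable_const ((prodPow_mp U hU hU' j).measurable hP)
      have int_eq : ∀ (P : Set Ω), MeasurableSet P → ∀ B : Finset (Fin n → ℤ),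
          ∫⁻ ω, (∑ m ∈ B, P.indicator (fun _ => (1:ℝ≥0∞)) (prodPow U m ω)) ∂μ
            = B.card * μ P := by
        intro P hP B
        rw [lintegral_finset_sum _ (fun m _ => meas_g P hP m)]
        have hone : ∀ m : Fin n → ℤ,
            ∫⁻ ω, P.indicator (fun _ => (1:ℝ≥0∞)) (prodPow U m ω) ∂μ = μ P := by
          intro m
          have h1 : (fun ω => P.indicator (fun _ => (1:ℝ≥0∞)) (prodPow U m ω))
              = ((prodPow U m) ⁻¹' P).indicator 1 := by
            ext ω; simp [Set.indicator_apply, Set.mem_preimage]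
          rw [h1, lintegral_indicator_one ((prodPow_mp U hU hU' m).measurable hP)]
          exact (prodPow_mp U hU hU' m).measure_preimage hP.nullMeasurableSet
        simp only [hone, Finset.sum_const, nsmul_eq_mul]
      have meas_f : Measurable
          (fun ω => ∑ j ∈ Bj, E.indicator (fun _ => (1:ℝ≥0∞)) (prodPow U j ω)) :=
        Finset.measurable_sum _ (fun j _ => meas_g E hE j)
      calc (((2*t+1)^n : ℕ) : ℝ≥0∞) * μ (A K)
          = (Bm.card : ℝ≥0∞) * μ (A K) := by rw [cardBm]
        _ = ∫⁻ ω, (∑ m ∈ Bm, (A K).indicator (fun _ => (1:ℝ≥0∞)) (prodPow U m ω)) ∂μ :=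
            (int_eq (A K) hmeasA Bm).symm
        _ ≤ ∫⁻ ω, discStrongTauber n α
              * (∑ j ∈ Bj, E.indicator (fun _ => (1:ℝ≥0∞)) (prodPow U j ω)) ∂μ :=
            lintegral_mono point
        _ = discStrongTauber n α * ((Bj.card : ℝ≥0∞) * μ E) := by
            rw [lintegral_const_mul _ meas_f, int_eq E hE Bj]
        _ = (discStrongTauber n α * μ E) * (((2*(t+K)+1)^n : ℕ) : ℝ≥0∞) := by
            rw [cardBj]; ring
    -- limit as t → ∞
    have hfinE : μ E ≠ ⊤ := measure_ne_top μ E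
    have hcfin : discStrongTauber n α * μ E ≠ ⊤ := ENNReal.mul_ne_top hC hfinE
    set c := (discStrongTauber n α * μ E).toReal with hcdef
    have hreal : ∀ t : ℕ, (2*(t:ℝ)+1)^n * (μ (A K)).toReal ≤ c * (2*((t:ℝ)+(K:ℝ))+1)^n := by
      intro t
      have h := key t
      have h2 := ENNReal.toReal_mono
        (ENNReal.mul_ne_top hcfin (natCast_ne_top _)) h
      rw [ENNReal.toReal_mul, ENNReal.toReal_mul, ENNReal.toReal_natCast, ENNReal.toReal_natCast] at h2
      push_cast at h2
      convert h2 using 2 <;> push_cast <;> ring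
    have hx : (μ (A K)).toReal ≤ c := by
      have hpos : ∀ t : ℕ, (0:ℝ) < 2*(t:ℝ)+1 := by intro t; positivity
      have hineq : ∀ t : ℕ,
          (μ (A K)).toReal ≤ c * ((2*((t:ℝ)+(K:ℝ))+1)/(2*(t:ℝ)+1))^n := by
        intro t
        rw [div_pow, ← mul_div_assoc, le_div_iff₀ (pow_pos (hpos t) n), mul_comm]
        exact hreal t
      have h1 : Filter.Tendsto (fun t : ℕ => (2*((t:ℝ)+(K:ℝ))+1)/(2*(t:ℝ)+1))
          Filter.atTop (nhds 1) := by
        have heq : (fun t : ℕ => (2*((t:ℝ)+(K:ℝ))+1)/(2*(t:ℝ)+1))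
            = fun t : ℕ => 1 + (2*(K:ℝ))/(2*(t:ℝ)+1) := by
          ext t
          have hne := (hpos t).ne'
          field_simp
          ring
        rw [heq]
        have hd : Filter.Tendsto (fun t : ℕ => 2*(t:ℝ)+1) Filter.atTop Filter.atTop :=
          Filter.tendsto_atTop_add_const_right _ 1
            (Filter.Tendsto.const_mul_atTop two_pos tendsto_natCast_atTop_atTop)
        have hz := Filter.Tendsto.div_atTop (tendsto_const_nhds (x := (2*(K:ℝ)))) hd
        simpa using (tendsto_const_nhds (x := (1:ℝ))).add hz
      have h2 : Filter.Tendsto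
          (fun t : ℕ => c * ((2*((t:ℝ)+(K:ℝ))+1)/(2*(t:ℝ)+1))^n) Filter.atTop (nhds c) := by
        have := (h1.pow n).const_mul c
        simpa using this
      exact ge_of_tendsto' h2 hineq
    exact (ENNReal.toReal_le_toReal (measure_ne_top μ _) hcfin).mp hx
  rw [hAunion, hAmono.directed_le.measure_iUnion]
  exact iSup_le hKey
end

section
/- Let T be an invertible measure preserving transformation on a probability space (Ω, Σ, μ) with index N_T = 1, i.e., there is no measurable set A of positive measure with A and TA disjoint. Then for every measurable set E with 0 < μ(E) < 1, the two-sided ergodic maximal function satisfies T*χ_E(ω) = 0 for μ-a.e. ω ∈ Ω \ E; consequently C*_T(α) = 1 for all α ∈ [0,1). -/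
open MeasureTheory Set ENNReal

section aux
variable {Ω : Type*} [MeasurableSpace Ω] {μ : Measure Ω} {T : Equiv.Perm Ω}

instance ergIdxNonempty : Nonempty {p : ℤ × ℤ // p.1 ≤ 0 ∧ 0 ≤ p.2} :=
  ⟨⟨(0, 0), le_rfl, le_rfl⟩⟩

lemma base_ae (hT : MeasurePreserving (⇑T) μ μ)
    (hidx : ¬ ∃ A : Set Ω, MeasurableSet A ∧ 0 < μ A ∧ Disjoint A (⇑T '' A))
    {E : Set Ω} (hE : MeasurableSet E) : ⇑T ⁻¹' E =ᵐ[μ] E := by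
  have hpre : MeasurableSet (⇑T ⁻¹' E) := hT.measurable hE
  have h1 : μ (⇑T ⁻¹' E \ E) = 0 := by
    by_contra h
    refine hidx ⟨_, hpre.diff hE, pos_iff_ne_zero.mpr h, ?_⟩
    refine Set.disjoint_left.mpr ?_
    rintro x ⟨hx1, hx2⟩ ⟨y, ⟨hy1, hy2⟩, rfl⟩
    exact hx2 hy1
  have h2 : μ (E \ ⇑T ⁻¹' E) = 0 := by
    by_contra h
    refine hidx ⟨_, hE.diff hpre, pos_iff_ne_zero.mpr h, ?_⟩
    refine Set.disjoint_left.mpr ?_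
    rintro x ⟨hx1, hx2⟩ ⟨y, ⟨hy1, hy2⟩, rfl⟩
    exact hy2 hx1
  exact ae_eq_set.mpr ⟨h1, h2⟩

lemma symm_ae (hT : MeasurePreserving (⇑T) μ μ) (hT' : MeasurePreserving (⇑T.symm) μ μ)
    (hidx : ¬ ∃ A : Set Ω, MeasurableSet A ∧ 0 < μ A ∧ Disjoint A (⇑T '' A))
    {E : Set Ω} (hE : MeasurableSet E) : ⇑T.symm ⁻¹' E =ᵐ[μ] E := by
  have h := hT'.quasiMeasurePreserving.preimage_ae_eq (base_ae hT hidx hE)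
  have heq : ⇑T.symm ⁻¹' (⇑T ⁻¹' E) = E := by
    ext ω; simp
  rw [heq] at h
  exact h.symm

lemma pow_ae (hT : MeasurePreserving (⇑T) μ μ) (hT' : MeasurePreserving (⇑T.symm) μ μ)
    (hidx : ¬ ∃ A : Set Ω, MeasurableSet A ∧ 0 < μ A ∧ Disjoint A (⇑T '' A))
    {E : Set Ω} (hE : MeasurableSet E) : ∀ j : ℤ, ⇑(T ^ j) ⁻¹' E =ᵐ[μ] E := by
  intro j
  induction j using Int.induction_on with
  | zero => simp; exact Filter.EventuallyEq.rfl
  | succ k ih =>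
      have : (T : Equiv.Perm Ω) ^ ((k : ℤ) + 1) = T ^ (k : ℤ) * T := by
        rw [zpow_add_one]
      rw [this]
      have hco : ⇑(T ^ (k : ℤ) * T) ⁻¹' E = ⇑T ⁻¹' (⇑(T ^ (k : ℤ)) ⁻¹' E) := by
        ext ω; simp [Equiv.Perm.mul_apply, Equiv.Perm.inv_def]
      rw [hco]
      exact (hT.quasiMeasurePreserving.preimage_ae_eq ih).trans (base_ae hT hidx hE)
  | pred k ih =>
      have : (T : Equiv.Perm Ω) ^ (-(k : ℤ) - 1) = T ^ (-(k : ℤ)) * T⁻¹ := by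
        rw [zpow_sub_one]
      rw [this]
      have hco : ⇑(T ^ (-(k : ℤ)) * T⁻¹) ⁻¹' E = ⇑T.symm ⁻¹' (⇑(T ^ (-(k : ℤ))) ⁻¹' E) := by
        ext ω; simp [Equiv.Perm.mul_apply, Equiv.Perm.inv_def]
      rw [hco]
      exact (hT'.quasiMeasurePreserving.preimage_ae_eq ih).trans (symm_ae hT hT' hidx hE)

/-- Main a.e. vanishing lemma, without the `μ E < 1` hypothesis. -/
lemma ergMax_ae_zero (hT : MeasurePreserving (⇑T) μ μ) (hT' : MeasurePreserving (⇑T.symm) μ μ)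
    (hidx : ¬ ∃ A : Set Ω, MeasurableSet A ∧ 0 < μ A ∧ Disjoint A (⇑T '' A))
    {E : Set Ω} (hE : MeasurableSet E) :
    ∀ᵐ ω ∂μ, ω ∉ E → ergMax T E ω = 0 := by
  have h : ∀ᵐ ω ∂μ, ∀ j : ℤ, ((T ^ j) ω ∈ E ↔ ω ∈ E) := by
    rw [ae_all_iff]
    intro j
    exact Filter.eventuallyEq_set.mp (pow_ae hT hT' hidx hE j)
  filter_upwards [h] with ω hω hωE
  have hzero : ∀ p : {p : ℤ × ℤ // p.1 ≤ 0 ∧ 0 ≤ p.2}, ergAvg T E p.1.1 p.1.2 ω = 0 := by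
    intro p
    unfold ergAvg
    rw [Finset.sum_eq_zero, zero_div]
    intro j _
    exact Set.indicator_of_notMem (fun hj => hωE ((hω j).mp hj)) _
  unfold ergMax
  simp only [hzero]
  exact ciSup_const

lemma ergMax_univ (ω : Ω) : ergMax T Set.univ ω = 1 := by
  have hone : ∀ p : {p : ℤ × ℤ // p.1 ≤ 0 ∧ 0 ≤ p.2}, ergAvg T Set.univ p.1.1 p.1.2 ω = 1 := by
    rintro ⟨⟨M, N⟩, hM, hN⟩
    unfold ergAvg
    simp only [Set.indicator_univ, Finset.sum_const, nsmul_eq_mul, mul_one]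
    have hMN : M ≤ N := hM.trans hN
    rw [Int.card_Icc]
    have hc : ((N + 1 - M).toNat : ℝ) = (N : ℝ) + 1 - M := by
      have := Int.toNat_of_nonneg (by omega : (0:ℤ) ≤ N + 1 - M)
      exact_mod_cast congrArg (fun z : ℤ => (z : ℝ)) this
    rw [hc]
    have hMr : (M : ℝ) ≤ 0 := by exact_mod_cast hM
    have hNr : (0 : ℝ) ≤ (N : ℝ) := by exact_mod_cast hN
    have hden : (N : ℝ) - M + 1 ≠ 0 := by
      have : (0:ℝ) < (N : ℝ) - M + 1 := by linarith
      exact this.ne'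
    field_simp
    ring
  unfold ergMax
  simp only [hone]
  exact ciSup_const

end aux

/-- If `T` is an invertible measure preserving transformation of a probability space with index
`N_T = 1` (no set of positive measure is disjoint from its image under `T`), then for every
measurable `E` with `0 < μ(E) < 1` the two-sided ergodic maximal function `T*χ_E` vanishes
a.e. on `Ω \ E`; consequently `C*_T(α) = 1` for all `α ∈ [0,1)`. -/
theorem stmt8 {Ω : Type*} [MeasurableSpace Ω] (μ : Measure Ω) [IsProbabilityMeasure μ]
    (T : Equiv.Perm Ω)
    (hT : MeasurePreserving (⇑T) μ μ) (hT' : MeasurePreserving (⇑T.symm) μ μ)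
    (hidx : ¬ ∃ A : Set Ω, MeasurableSet A ∧ 0 < μ A ∧ Disjoint A (⇑T '' A)) :
    (∀ E : Set Ω, MeasurableSet E → 0 < μ E → μ E < 1 →
        ∀ᵐ ω ∂μ, ω ∉ E → ergMax T E ω = 0) ∧
      ∀ α : ℝ, 0 ≤ α → α < 1 → ergTauber μ T α = 1 := by
  constructor
  · intro E hE _ _
    exact ergMax_ae_zero hT hT' hidx hE
  · intro α hα0 hα1
    apply le_antisymm
    · refine iSup_le ?_
      rintro ⟨E, hE, hpos⟩
      have hae := ergMax_ae_zero hT hT' hidx hE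
      have hsub : {ω | α < ergMax T E ω} ≤ᵐ[μ] E := by
        filter_upwards [hae] with ω hω hmem
        by_contra hωE
        have hmem' : α < ergMax T E ω := hmem
        rw [hω hωE] at hmem'
        linarith
      have hle : μ {ω | α < ergMax T E ω} ≤ μ E := measure_mono_ae hsub
      exact ENNReal.div_le_of_le_mul (by simpa using hle)
    · have key : μ {ω | α < ergMax T (Set.univ : Set Ω) ω} / μ (Set.univ : Set Ω) = 1 := by
        have hset : {ω | α < ergMax T (Set.univ : Set Ω) ω} = Set.univ := by
          ext ω
          simp [ergMax_univ, hα1]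
        rw [hset, measure_univ]
        simp
      calc (1 : ℝ≥0∞) = μ {ω | α < ergMax T (Set.univ : Set Ω) ω} / μ (Set.univ : Set Ω) :=
            key.symm
        _ ≤ ergTauber μ T α :=
            le_iSup (fun E : {E : Set Ω // MeasurableSet E ∧ 0 < μ E} =>
              μ {ω | α < ergMax T E.1 ω} / μ E.1)
              ⟨Set.univ, MeasurableSet.univ, by simp⟩
end

section
/- Let T be an invertible measure preserving transformation with finite index N_T on a probability space (Ω, Σ, μ), and let E be a measurable set with 0 < μ(E) < 1. Then for μ-a.e. ω ∈ Ω \ E there exists k with 1 ≤ k ≤ N_T such that T^k ω ∈ Ω \ E. -/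
open MeasureTheory Set ENNReal

/-- `HasTower μ T N`: there is a set `A` of positive measure with `A, TA, …, T^{N-1}A`
pairwise disjoint.  The index `N_T` equals `N` iff `HasTower μ T N ∧ ¬ HasTower μ T (N+1)`,
and `N_T = ∞` iff `HasTower μ T N` holds for all `N`. -/
def HasTower {Ω : Type*} [MeasurableSpace Ω] (μ : Measure Ω) (T : Equiv.Perm Ω) (N : ℕ) : Prop :=
  ∃ A : Set Ω, MeasurableSet A ∧ 0 < μ A ∧
    ∀ i j : ℕ, i < N → j < N → i ≠ j → Disjoint ((⇑(T ^ i)) '' A) ((⇑(T ^ j)) '' A)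

/-- If `T` is an invertible measure preserving transformation of a probability space with finite
index `N_T = N`, and `E` is measurable with `0 < μ(E) < 1`, then for a.e. `ω ∈ Ω \ E` some
iterate `T^k ω` with `1 ≤ k ≤ N` again lies in `Ω \ E`. -/
theorem stmt11 {Ω : Type*} [MeasurableSpace Ω] (μ : Measure Ω) [IsProbabilityMeasure μ]
    (T : Equiv.Perm Ω)
    (hT : MeasurePreserving (⇑T) μ μ) (hT' : MeasurePreserving (⇑T.symm) μ μ)
    (N : ℕ) (hN : 1 ≤ N) (htower : HasTower μ T N) (hmax : ¬ HasTower μ T (N + 1))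
    (E : Set Ω) (hE : MeasurableSet E) (hE0 : 0 < μ E) (hE1 : μ E < 1) :
    ∀ᵐ ω ∂μ, ω ∉ E → ∃ k : ℕ, 1 ≤ k ∧ k ≤ N ∧ (T ^ k) ω ∉ E := by
  set B : Set Ω := Eᶜ ∩ ⋂ k ∈ Finset.Icc 1 N, (⇑(T ^ k)) ⁻¹' E with hB
  have hmeas : ∀ k : ℕ, Measurable (⇑(T ^ k)) := by
    intro k
    rw [Equiv.Perm.coe_pow]
    exact hT.measurable.iterate k
  have hBmeas : MeasurableSet B :=
    hE.compl.inter (MeasurableSet.biInter (Set.to_countable _)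
      (fun k _ => hE.preimage (hmeas k)))
  have hB0 : μ B = 0 := by
    by_contra h
    apply hmax
    refine ⟨B, hBmeas, pos_iff_ne_zero.mpr h, ?_⟩
    have key : ∀ i j : ℕ, i < j → j ≤ N →
        Disjoint ((⇑(T ^ i)) '' B) ((⇑(T ^ j)) '' B) := by
      intro i j hlt hjN
      rw [Set.disjoint_left]
      rintro x ⟨a, ha, rfl⟩ ⟨b, hb, hab⟩
      have hpow : (T ^ i) ((T ^ (j - i)) b) = (T ^ i) a := by
        rw [← Equiv.Perm.mul_apply, ← pow_add, show i + (j - i) = j by omega, hab]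
      have heq : (T ^ (j - i)) b = a := (Equiv.injective _) hpow
      have hbE : (T ^ (j - i)) b ∈ E := by
        have h2 := hb.2
        simp only [Set.mem_iInter, Finset.mem_Icc, Set.mem_preimage] at h2
        exact h2 (j - i) ⟨by omega, by omega⟩
      exact ha.1 (heq ▸ hbE)
    intro i j hi hj hij
    rcases lt_or_gt_of_ne hij with h | h
    · exact key i j h (by omega)
    · exact (key j i h (by omega)).symm
  have := measure_eq_zero_iff_ae_notMem.mp hB0
  filter_upwards [this] with ω hω hωE
  by_contra hcon
  push_neg at hcon
  apply hω
  refine ⟨hωE, ?_⟩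
  simp only [Set.mem_iInter, Finset.mem_Icc, Set.mem_preimage]
  intro k hk
  exact hcon k hk.1 hk.2
end
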